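/- arXiv:2111.07127 — 8 statements merged into one kernel-verified Lean document; each statement's English description precedes it below -/
import Mathlib

section
/- Let p be an odd prime. For every integer k with 1 ≤ k ≤ p, the Stirling number of the second kind satisfies S(p-1+k, p) ≡ 1 (mod p) if k = 1 or k = p, and S(p-1+k, p) ≡ 0 (mod p) otherwise. -/
/-!
Over any domain the falling factorials `(X)_m` form a basis of `R[X]` (one polynomial of each
degree), and the Stirling recurrence says exactly that the coordinates of `X ^ n` in this basis are
the numbers `S(n, m)`. Over `𝔽_p` we have `(X)_p = X ^ p - X` and `(X)_(p + j) = (X)_p (X)_j`, so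
`X ^ (p + k) = X ^ (k + 1) + (X)_p X ^ k`, and reading off the coordinate of `(X)_(p + j)` gives
`S(p + k, p + j) ≡ S(k + 1, p + j) + S(k, j) (mod p)`. For `j = 0` the right-hand side is
`S(k + 1, p) + [k = 0]`, which is the claim.

The Stirling numbers defined by counting finpartitions satisfy the same recurrence, by deleting
a point: either it forms a part on its own, or it was added to one of the parts of the rest.
-/

/-- Stirling number of the second kind: number of partitions of an `n`-set
into `k` nonempty blocks. -/
noncomputable def stirling (n k : ℕ) : ℕ :=
  Nat.card {P : Finpartition (Finset.univ : Finset (Fin n)) // P.parts.card = k}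

open Finset Polynomial

namespace Finpartition

lemma parts_avoid_of_mem {α : Type*} [GeneralizedBooleanAlgebra α] [DecidableEq α] {a b : α}
    (P : Finpartition a) (hb : b ∈ P.parts) : (P.avoid b).parts = P.parts.erase b := by
  ext c
  rw [mem_avoid, mem_erase]
  constructor
  · rintro ⟨d, hd, hdb, rfl⟩
    have hne : d ≠ b := fun h ↦ hdb h.le
    have hdisj : Disjoint d b := P.disjoint hd hb hne
    rw [hdisj.sdiff_eq_left]
    exact ⟨hne, hd⟩
  · rintro ⟨hne, hc⟩
    have hdisj : Disjoint c b := P.disjoint hc hb hne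
    exact ⟨c, hc, fun hcb ↦ P.ne_bot hc (hdisj.eq_bot_of_le hcb), hdisj.sdiff_eq_left⟩

variable {α : Type*} [DecidableEq α] {a : α} {s t : Finset α}

lemma notMem_of_mem_parts (P : Finpartition s) (ha : a ∉ s) (ht : t ∈ P.parts) : a ∉ t :=
  fun h ↦ ha (P.le ht h)

def extendSingleton (P : Finpartition s) (ha : a ∉ s) : Finpartition (insert a s) :=
  P.extend (singleton_ne_empty a) (disjoint_singleton_right.2 ha)
    (by rw [sup_eq_union, union_comm, ← insert_eq])

lemma parts_extendSingleton (P : Finpartition s) (ha : a ∉ s) :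
    (P.extendSingleton ha).parts = insert {a} P.parts := rfl

lemma card_parts_extendSingleton (P : Finpartition s) (ha : a ∉ s) :
    #(P.extendSingleton ha).parts = #P.parts + 1 :=
  card_extend ..

lemma part_extendSingleton (P : Finpartition s) (ha : a ∉ s) :
    (P.extendSingleton ha).part a = {a} :=
  part_eq_of_mem _ (mem_insert_self _ _) (mem_singleton_self a)

def insertIntoPart (P : Finpartition s) (ha : a ∉ s) (ht : t ∈ P.parts) :
    Finpartition (insert a s) :=
  (P.avoid t).extend (insert_ne_empty a t)
    (disjoint_insert_right.2 ⟨fun h ↦ ha (mem_sdiff.1 h).1, sdiff_disjoint⟩)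
    (by rw [sup_eq_union, union_insert, sdiff_union_of_subset (P.le ht)])

lemma parts_insertIntoPart (P : Finpartition s) (ha : a ∉ s) (ht : t ∈ P.parts) :
    (P.insertIntoPart ha ht).parts = insert (insert a t) (P.parts.erase t) := by
  rw [insertIntoPart, extend_parts, parts_avoid_of_mem P ht]

lemma card_parts_insertIntoPart (P : Finpartition s) (ha : a ∉ s) (ht : t ∈ P.parts) :
    #(P.insertIntoPart ha ht).parts = #P.parts := by
  rw [insertIntoPart, card_extend, parts_avoid_of_mem P ht, card_erase_add_one ht]

lemma part_insertIntoPart (P : Finpartition s) (ha : a ∉ s) (ht : t ∈ P.parts) :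
    (P.insertIntoPart ha ht).part a = insert a t :=
  part_eq_of_mem _ (by simp [parts_insertIntoPart]) (mem_insert_self a t)

def erasePoint (P : Finpartition (insert a s)) (ha : a ∉ s) : Finpartition s :=
  (P.avoid {a}).copy (by rw [sdiff_singleton_eq_erase, erase_insert ha])

section erasePoint

variable (P : Finpartition (insert a s)) (ha : a ∉ s)

lemma part_mem_parts_insert : P.part a ∈ P.parts := P.part_mem.2 (mem_insert_self a s)

lemma parts_erasePoint_of_part_eq (h : P.part a = {a}) :
    (P.erasePoint ha).parts = P.parts.erase {a} :=
  parts_avoid_of_mem P (h ▸ P.part_mem_parts_insert)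

lemma parts_erasePoint_of_part_ne (h : P.part a ≠ {a}) :
    (P.erasePoint ha).parts = insert ((P.part a).erase a) (P.parts.erase (P.part a)) := by
  have erase_eq {d} (hd : d ∈ P.parts) (hne : d ≠ P.part a) : d \ {a} = d :=
    (disjoint_singleton_right.2 fun had ↦ hne (P.part_eq_of_mem hd had).symm).sdiff_eq_left
  have not_subset {d} (hd : d ∈ P.parts) (hne : d ≠ {a}) : ¬d ⊆ {a} := fun hsub ↦
    (subset_singleton_iff.1 hsub).elim (P.ne_empty hd) hne
  ext u
  simp only [erasePoint, copy_parts, mem_avoid, mem_insert, mem_erase]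
  constructor
  · rintro ⟨d, hd, -, rfl⟩
    obtain rfl | hne := eq_or_ne d (P.part a)
    · exact Or.inl (sdiff_singleton_eq_erase a _)
    · rw [erase_eq hd hne]
      exact Or.inr ⟨hne, hd⟩
  · rintro (rfl | ⟨hne, hu⟩)
    · exact ⟨P.part a, P.part_mem_parts_insert, not_subset P.part_mem_parts_insert h,
        sdiff_singleton_eq_erase a _⟩
    · refine ⟨u, hu, not_subset hu fun hua ↦ hne ?_, erase_eq hu hne⟩
      exact (P.part_eq_of_mem hu (hua ▸ mem_singleton_self a)).symm

lemma card_parts_erasePoint_of_part_eq (h : P.part a = {a}) :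
    #(P.erasePoint ha).parts + 1 = #P.parts := by
  rw [P.parts_erasePoint_of_part_eq ha h, card_erase_add_one (h ▸ P.part_mem_parts_insert)]

lemma erase_part_notMem_parts_erase_part :
    (P.part a).erase a ∉ P.parts.erase (P.part a) := fun hmem ↦ by
  obtain ⟨hne, hmem⟩ := mem_erase.1 hmem
  obtain ⟨x, hx⟩ := P.nonempty_of_mem_parts hmem
  exact disjoint_left.1 (P.disjoint hmem P.part_mem_parts_insert hne) hx (mem_of_mem_erase hx)

lemma card_parts_erasePoint_of_part_ne (h : P.part a ≠ {a}) :
    #(P.erasePoint ha).parts = #P.parts := by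
  rw [P.parts_erasePoint_of_part_ne ha h,
    card_insert_of_notMem P.erase_part_notMem_parts_erase_part,
    card_erase_add_one P.part_mem_parts_insert]

lemma erase_part_mem_parts_erasePoint (h : P.part a ≠ {a}) :
    (P.part a).erase a ∈ (P.erasePoint ha).parts := by
  rw [P.parts_erasePoint_of_part_ne ha h]
  exact mem_insert_self _ _

lemma extendSingleton_erasePoint (h : P.part a = {a}) :
    (P.erasePoint ha).extendSingleton ha = P := by
  ext1
  rw [parts_extendSingleton, P.parts_erasePoint_of_part_eq ha h,
    insert_erase (h ▸ P.part_mem_parts_insert)]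

lemma insertIntoPart_erasePoint (h : P.part a ≠ {a}) :
    (P.erasePoint ha).insertIntoPart ha (P.erase_part_mem_parts_erasePoint ha h) = P := by
  ext1
  rw [parts_insertIntoPart, P.parts_erasePoint_of_part_ne ha h,
    insert_erase (P.mem_part (mem_insert_self a s)),
    erase_insert P.erase_part_notMem_parts_erase_part, insert_erase P.part_mem_parts_insert]

end erasePoint

lemma erasePoint_extendSingleton (P : Finpartition s) (ha : a ∉ s) :
    (P.extendSingleton ha).erasePoint ha = P := by
  ext1
  rw [parts_erasePoint_of_part_eq _ ha (P.part_extendSingleton ha), parts_extendSingleton,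
    erase_insert fun h ↦ P.notMem_of_mem_parts ha h (mem_singleton_self a)]

lemma part_insertIntoPart_ne (P : Finpartition s) (ha : a ∉ s) (ht : t ∈ P.parts) :
    (P.insertIntoPart ha ht).part a ≠ {a} := by
  rw [part_insertIntoPart]
  intro h
  obtain ⟨x, hx⟩ := P.nonempty_of_mem_parts ht
  have hxa : x = a := mem_singleton.1 (h ▸ mem_insert_of_mem hx)
  exact P.notMem_of_mem_parts ha ht (hxa ▸ hx)

lemma erasePoint_insertIntoPart (P : Finpartition s) (ha : a ∉ s) (ht : t ∈ P.parts) :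
    (P.insertIntoPart ha ht).erasePoint ha = P := by
  ext1
  rw [parts_erasePoint_of_part_ne _ ha (P.part_insertIntoPart_ne ha ht), part_insertIntoPart,
    erase_insert (P.notMem_of_mem_parts ha ht), parts_insertIntoPart,
    erase_insert fun h ↦ P.notMem_of_mem_parts ha (mem_of_mem_erase h) (mem_insert_self a t),
    insert_erase ht]

lemma erase_part_insertIntoPart (P : Finpartition s) (ha : a ∉ s) (ht : t ∈ P.parts) :
    ((P.insertIntoPart ha ht).part a).erase a = t := by
  rw [part_insertIntoPart, erase_insert (P.notMem_of_mem_parts ha ht)]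

def insertEquiv (ha : a ∉ s) (k : ℕ) :
    {P : Finpartition (insert a s) // #P.parts = k + 1} ≃
      {Q : Finpartition s // #Q.parts = k} ⊕
        Σ Q : {Q : Finpartition s // #Q.parts = k + 1}, Q.1.parts where
  toFun P :=
    if h : P.1.part a = {a} then
      .inl ⟨P.1.erasePoint ha, by
        have := P.1.card_parts_erasePoint_of_part_eq ha h
        omega⟩
    else
      .inr ⟨⟨P.1.erasePoint ha, (P.1.card_parts_erasePoint_of_part_ne ha h).trans P.2⟩,
        ⟨_, P.1.erase_part_mem_parts_erasePoint ha h⟩⟩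
  invFun := Sum.elim
    (fun Q ↦ ⟨Q.1.extendSingleton ha, by rw [card_parts_extendSingleton, Q.2]⟩)
    fun Q ↦ ⟨Q.1.1.insertIntoPart ha Q.2.2, (card_parts_insertIntoPart ..).trans Q.1.2⟩
  left_inv P := by
    by_cases h : P.1.part a = {a}
    · simp only [dif_pos h, Sum.elim_inl]
      exact Subtype.ext (P.1.extendSingleton_erasePoint ha h)
    · simp only [dif_neg h, Sum.elim_inr]
      exact Subtype.ext (P.1.insertIntoPart_erasePoint ha h)
  right_inv := by
    rintro (Q | ⟨Q, t, ht⟩)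
    · simp only [Sum.elim_inl, part_extendSingleton, dif_pos, erasePoint_extendSingleton]
    · dsimp only [Sum.elim_inr]
      rw [dif_neg (Q.1.part_insertIntoPart_ne ha ht)]
      exact congrArg Sum.inr <| Sigma.subtype_ext (β := Finset α)
        (Subtype.ext (Q.1.erasePoint_insertIntoPart ha ht)) (Q.1.erase_part_insertIntoPart ha ht)

lemma natCard_insert [Fintype α] (ha : a ∉ s) (k : ℕ) :
    Nat.card {P : Finpartition (insert a s) // #P.parts = k + 1} =
      (k + 1) * Nat.card {Q : Finpartition s // #Q.parts = k + 1} +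
        Nat.card {Q : Finpartition s // #Q.parts = k} := by
  rw [Nat.card_congr (insertEquiv ha k), Nat.card_sum, Nat.card_sigma, add_comm]
  simp only [Nat.card_eq_fintype_card, Fintype.card_coe]
  rw [sum_congr rfl fun Q _ ↦ Q.2, sum_const, card_univ, smul_eq_mul, mul_comm]

theorem natCard_card_parts_eq_stirlingSecond [Fintype α] (s : Finset α) (k : ℕ) :
    Nat.card {P : Finpartition s // #P.parts = k} = (#s).stirlingSecond k := by
  induction s using Finset.induction_on generalizing k with
  | empty =>
    have hparts (P : Finpartition (∅ : Finset α)) : P.parts = ∅ := parts_eq_empty_iff.2 rfl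
    cases k
    · simpa [hparts] using Fintype.card_unique (α := Finpartition (⊥ : Finset α))
    · simp [hparts]
  | insert a s ha ih =>
    cases k with
    | zero =>
      have : IsEmpty {P : Finpartition (insert a s) // #P.parts = 0} := ⟨fun P ↦
        insert_ne_empty a s (parts_eq_empty_iff.1 (card_eq_zero.1 P.2))⟩
      simp [card_insert_of_notMem ha]
    | succ k =>
      rw [natCard_insert ha, ih, ih, card_insert_of_notMem ha, Nat.stirlingSecond_succ_succ]

end Finpartition

namespace Polynomial

variable {R : Type*} [Ring R]

lemma X_mul_descPochhammer (m : ℕ) :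
    X * descPochhammer R m = descPochhammer R (m + 1) + m • descPochhammer R m := by
  rw [descPochhammer_succ_right, mul_sub, ← X_mul, nsmul_eq_mul, ← Nat.cast_comm]
  abel

lemma X_pow_eq_sum_stirlingSecond_nsmul_descPochhammer (n : ℕ) :
    (X : R[X]) ^ n = ∑ m ∈ range (n + 1), n.stirlingSecond m • descPochhammer R m := by
  induction n with
  | zero => simp
  | succ n ih =>
    have shift : ∑ m ∈ range (n + 1), ((m + 1) * n.stirlingSecond (m + 1)) •
        descPochhammer R (m + 1) =
          ∑ m ∈ range (n + 1), (m * n.stirlingSecond m) • descPochhammer R m := by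
      rw [sum_range_succ,
        sum_range_succ' (fun m ↦ (m * n.stirlingSecond m) • descPochhammer R m)]
      simp [Nat.stirlingSecond_eq_zero_of_lt n.lt_succ_self]
    rw [pow_succ', ih, mul_sum, sum_range_succ' _ (n + 1)]
    simp only [Nat.stirlingSecond_succ_succ, add_smul, sum_add_distrib, mul_smul_comm,
      X_mul_descPochhammer, smul_add, Nat.stirlingSecond_succ_zero, zero_smul, add_zero, shift]
    rw [add_comm]
    simp only [smul_smul, mul_comm]

variable (R) [IsDomain R]

noncomputable def descPochhammerBasis : Module.Basis ℕ R R[X] :=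
  Sequence.basis ⟨descPochhammer R, fun m ↦ by
      rw [degree_eq_natDegree (monic_descPochhammer R m).ne_zero, descPochhammer_natDegree]⟩
    fun m ↦ by simp [(monic_descPochhammer R m).leadingCoeff]

variable {R}

@[simp]
lemma descPochhammerBasis_apply (m : ℕ) : descPochhammerBasis R m = descPochhammer R m :=
  Sequence.basis_eq_self _ _ m

lemma descPochhammerBasis_repr_X_pow (n m : ℕ) :
    (descPochhammerBasis R).repr (X ^ n) m = n.stirlingSecond m := by
  rw [X_pow_eq_sum_stirlingSecond_nsmul_descPochhammer]
  simp only [map_sum, map_nsmul, ← descPochhammerBasis_apply, Module.Basis.repr_self,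
    Finsupp.coe_finsetSum, Finset.sum_apply, Finsupp.smul_apply, Finsupp.single_apply, smul_ite,
    smul_zero, sum_ite_eq', nsmul_one]
  split_ifs with hm
  · rfl
  · rw [Nat.stirlingSecond_eq_zero_of_lt (by simpa using hm), Nat.cast_zero]

section ZMod

variable (p : ℕ) [Fact p.Prime]

lemma descPochhammer_zmod_prime : descPochhammer (ZMod p) p = X ^ p - X := by
  have hp : p ≠ 0 := (Fact.out : p.Prime).ne_zero
  apply sub_eq_zero.1
  refine eq_zero_of_natDegree_lt_card_of_eval_eq_zero _ (f := id) Function.injective_id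
    (fun a ↦ ?_) ?_
  · rw [id, eval_sub, ← ZMod.natCast_zmod_val a, descPochhammer_eval_coe_nat_of_lt a.val_lt]
    simp [ZMod.pow_card]
  · rw [ZMod.card]
    exact IsMonicOfDegree.natDegree_sub_lt hp
      ⟨descPochhammer_natDegree _ _, monic_descPochhammer _ _⟩
      ((isMonicOfDegree_X_pow (R := ZMod p) p).sub (by simpa using (Fact.out : p.Prime).one_lt))

lemma descPochhammer_zmod_prime_add (j : ℕ) :
    descPochhammer (ZMod p) (p + j) = descPochhammer (ZMod p) p * descPochhammer (ZMod p) j := by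
  rw [← descPochhammer_mul]
  simp

lemma descPochhammerBasis_repr_descPochhammer_prime_mul (f : (ZMod p)[X]) (j : ℕ) :
    (descPochhammerBasis (ZMod p)).repr (descPochhammer (ZMod p) p * f) (p + j) =
      (descPochhammerBasis (ZMod p)).repr f j := by
  have h : (descPochhammerBasis (ZMod p)).repr.toLinearMap ∘ₗ
      LinearMap.mulLeft (ZMod p) (descPochhammer (ZMod p) p) =
        Finsupp.lmapDomain (ZMod p) (ZMod p) (p + ·) ∘ₗ
          (descPochhammerBasis (ZMod p)).repr.toLinearMap :=
    (descPochhammerBasis (ZMod p)).ext fun i ↦ by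
      simp only [LinearMap.comp_apply, LinearEquiv.coe_coe, LinearMap.mulLeft_apply,
        Finsupp.lmapDomain_apply, descPochhammerBasis_apply, ← descPochhammer_zmod_prime_add]
      simp only [← descPochhammerBasis_apply, Module.Basis.repr_self, Finsupp.mapDomain_single]
  have := congr($h f (p + j))
  simpa [Finsupp.mapDomain_apply (add_right_injective p)] using this

end ZMod

end Polynomial

theorem Nat.stirlingSecond_prime_add_modEq (p : ℕ) [Fact p.Prime] (k j : ℕ) :
    (p + k).stirlingSecond (p + j) ≡
      (k + 1).stirlingSecond (p + j) + k.stirlingSecond j [MOD p] := by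
  have hX : (X : (ZMod p)[X]) ^ (p + k) = X ^ (k + 1) + descPochhammer (ZMod p) p * X ^ k := by
    rw [descPochhammer_zmod_prime]
    ring
  have := congr((descPochhammerBasis (ZMod p)).repr $hX (p + j))
  rw [LinearEquiv.map_add, Finsupp.add_apply, descPochhammerBasis_repr_descPochhammer_prime_mul,
    descPochhammerBasis_repr_X_pow, descPochhammerBasis_repr_X_pow,
    descPochhammerBasis_repr_X_pow] at this
  rw [← ZMod.natCast_eq_natCast_iff]
  push_cast
  exact this

lemma stirling_eq_stirlingSecond (n k : ℕ) : stirling n k = n.stirlingSecond k := by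
  rw [stirling, Finpartition.natCard_card_parts_eq_stirlingSecond, card_univ, Fintype.card_fin]

theorem stmt_4_general (p k : ℕ) (hp : p.Prime) (h1 : 1 ≤ k) (h2 : k ≤ p) :
    stirling (p - 1 + k) p ≡ (if k = 1 ∨ k = p then 1 else 0) [MOD p] := by
  have := Fact.mk hp
  obtain ⟨k, rfl⟩ : ∃ j, k = j + 1 := ⟨k - 1, by omega⟩
  have key := Nat.stirlingSecond_prime_add_modEq p k 0
  rw [add_zero] at key
  rw [stirling_eq_stirlingSecond, show p - 1 + (k + 1) = p + k by omega]
  rcases k with _ | k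
  · simpa [Nat.stirlingSecond_eq_zero_of_lt hp.one_lt] using key
  · rw [Nat.stirlingSecond_succ_zero, add_zero] at key
    obtain heq | hlt := h2.eq_or_lt
    · simpa [heq, Nat.stirlingSecond_self] using key
    · rw [if_neg (by omega)]
      simpa [Nat.stirlingSecond_eq_zero_of_lt hlt] using key

theorem stmt_4 (p k : ℕ) (hp : p.Prime) (hodd : Odd p) (h1 : 1 ≤ k) (h2 : k ≤ p) :
    stirling (p - 1 + k) p ≡ (if k = 1 ∨ k = p then 1 else 0) [MOD p] :=
  stmt_4_general p k hp h1 h2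
end

section
/- Let p be an odd prime and let t be an integer with 1 ≤ t ≤ p-1. Then (t+p-1)! ≡ -p·(t-1)! (mod p^2). -/
lemma ascFac_cast_prod (n : ℕ) : ∀ k : ℕ,
    ((Nat.ascFactorial n k : ℕ) : ℤ) = ∏ i ∈ Finset.range k, ((n : ℤ) + i)
  | 0 => by simp
  | k + 1 => by
    rw [Nat.ascFactorial_succ, Finset.prod_range_succ, ← ascFac_cast_prod n k]
    push_cast
    ring

theorem stmt_7 (p t : ℕ) (hp : p.Prime) (hodd : Odd p) (h1 : 1 ≤ t) (h2 : t ≤ p - 1) :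
    (Nat.factorial (t + p - 1) : ℤ) ≡ -(p : ℤ) * (Nat.factorial (t - 1) : ℤ) [ZMOD (p : ℤ) ^ 2] := by
  have hfact := hp.one_lt.le
  haveI : Fact p.Prime := ⟨hp⟩
  -- key factorial identity
  have key : ((p - 1).factorial : ℤ) * ((Nat.ascFactorial p t : ℕ) : ℤ)
      = ((t + p - 1).factorial : ℤ) := by
    rw [← Nat.cast_mul, Nat.factorial_mul_ascFactorial' p t hp.pos, Nat.add_comm p t]
  set A : ℤ := ∏ i ∈ Finset.range (t - 1), ((p : ℤ) + (i + 1)) with hAdef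
  have hsplit : ((Nat.ascFactorial p t : ℕ) : ℤ) = A * (p : ℤ) := by
    rw [ascFac_cast_prod]
    have ht : t = (t - 1) + 1 := (Nat.succ_pred_eq_of_pos h1).symm
    rw [ht, Finset.prod_range_succ']
    push_cast
    simp [hAdef]
  -- A ≡ (t-1)! mod p
  have hA : A ≡ ((t - 1).factorial : ℤ) [ZMOD (p : ℤ)] := by
    have : ((A : ℤ) : ZMod p) = (((t - 1).factorial : ℤ) : ZMod p) := by
      rw [hAdef]
      push_cast
      rw [ZMod.natCast_self]
      simp only [zero_add]
      rw [← Finset.prod_range_add_one_eq_factorial (t-1)]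
      push_cast
      rfl
    rwa [ZMod.intCast_eq_intCast_iff'] at this
  -- Wilson
  have hW : (((p - 1).factorial : ℕ) : ℤ) ≡ -1 [ZMOD (p : ℤ)] := by
    have : ((((p - 1).factorial : ℕ) : ℤ) : ZMod p) = ((-1 : ℤ) : ZMod p) := by
      push_cast
      rw [ZMod.wilsons_lemma]
    rwa [ZMod.intCast_eq_intCast_iff'] at this
  have hB : ((p - 1).factorial : ℤ) * A ≡ -1 * ((t - 1).factorial : ℤ) [ZMOD (p : ℤ)] :=
    hW.mul hA
  obtain ⟨c, hc⟩ := (Int.ModEq.dvd hB)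
  show _ ≡ _ [ZMOD _]
  rw [Int.modEq_iff_dvd]
  refine ⟨c, ?_⟩
  rw [← key, hsplit]
  nlinarith [hc]
end

section
/- Let p be an odd prime and let k be an integer with 0 ≤ k ≤ p-2. Then (k+1) · binom(p+k, p-1) ≡ p (mod p^2). -/
theorem stmt_8 (p k : ℕ) (hp : p.Prime) (hodd : Odd p) (h2 : k ≤ p - 2) :
    (k + 1) * (p + k).choose (p - 1) ≡ p [MOD p ^ 2] := by
  haveI : Fact p.Prime := ⟨hp⟩
  have hp2 : 2 ≤ p := hp.two_le
  have hklt : k < p := lt_of_le_of_lt h2 (by omega)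
  have hsymm : (p + k).choose (p - 1) = (p + k).choose (k + 1) := by
    rw [← Nat.choose_symm (show p - 1 ≤ p + k by omega)]
    congr 1
    omega
  have hid : (k + 1) * (p + k).choose (k + 1) = p * (p + k).choose k := by
    have h4 := Nat.choose_succ_right_eq (p + k) k
    have hpk : p + k - k = p := by omega
    rw [hpk] at h4
    rw [mul_comm, h4, mul_comm]
  -- Lucas: choose (p+k) k ≡ 1 [MOD p]
  have hluc : (p + k).choose k ≡ 1 [MOD p] := by
    have := Choose.choose_modEq_choose_mod_mul_choose_div_nat (n := p + k) (k := k) (p := p)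
    have e1 : (p + k) % p = k := by rw [Nat.add_mod_left]; exact Nat.mod_eq_of_lt hklt
    have e2 : (p + k) / p = 1 := by
      rw [Nat.add_div_left _ (by omega), Nat.div_eq_of_lt hklt]
    have e3 : k % p = k := Nat.mod_eq_of_lt hklt
    have e4 : k / p = 0 := Nat.div_eq_of_lt hklt
    simpa [e1, e2, e3, e4] using this
  have : p * (p + k).choose k ≡ p * 1 [MOD p * p] := hluc.mul_left' (c := p)
  calc (k + 1) * (p + k).choose (p - 1) = p * (p + k).choose k := by rw [hsymm, hid]
    _ ≡ p * 1 [MOD p ^ 2] := by rwa [pow_two]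
    _ = p := mul_one p
end

section
/- Let p be an odd prime and let r be an integer with 1 ≤ r < p-1. Then the r-restricted Stirling number of the second kind S(r+p, p)_{≤r} is divisible by p. -/
/-!
By Cauchy's theorem some permutation `σ` of the `(r + p)`-set has order `p`, and it has a fixed
point `a` because `p ∤ r + p`. Counting the orbits of `σ` on the partitions into `p` blocks of
size at most `r`, `p` divides their number unless one of them is `σ`-invariant. In an invariant
partition `σ` permutes the `p` blocks and fixes the block of `a`; since all orbits have size `1`
or `p`, it fixes every block. The block of a point moved by `σ` then contains a whole `p`-cycle
of `σ`, so it has more than `r` elements.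
-/

/-- `r`-restricted Stirling number of the second kind: number of partitions of an
`n`-set into `k` nonempty blocks, each of size at most `r`. -/
noncomputable def stirlingRes (n k r : ℕ) : ℕ :=
  Nat.card {P : Finpartition (Finset.univ : Finset (Fin n)) //
    P.parts.card = k ∧ ∀ b ∈ P.parts, b.card ≤ r}

open Finset Equiv
open scoped Pointwise

theorem MulAction.subtypePerm_toPerm_pow_eq_one {G β : Type*} [Group G] [MulAction G β] {g : G}
    {n : ℕ} (hg : g ^ n = 1) {q : β → Prop} (hq : ∀ x, q (toPerm g x) ↔ q x) :
    (toPerm g).subtypePerm hq ^ n = 1 := by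
  ext x
  simp [← toPermHom_apply, ← map_pow, hg]

namespace Equiv.Perm

variable {β : Type*} {p : ℕ} [hp : Fact p.Prime] {τ : Perm β}

theorem le_card_of_pow_prime_eq_one [Finite β] (hτ : τ ^ p = 1) (hτ1 : τ ≠ 1) :
    p ≤ Nat.card β := by
  rw [← hp.out.dvd_factorial, ← Nat.card_perm, ← orderOf_eq_prime hτ hτ1]
  exact orderOf_dvd_natCard τ

theorem eq_one_of_pow_prime_eq_one_of_card_eq [Fintype β] [DecidableEq β] (hτ : τ ^ p = 1)
    (hcard : Fintype.card β = p) {a : β} (ha : τ a = a) : τ = 1 := by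
  have hdvd : p ∣ #τ.supportᶜ := by
    refine Nat.modEq_zero_iff_dvd.mp ((card_compl_support_modEq (n := 1) ?_).trans ?_)
    · rwa [pow_one]
    · rw [hcard]
      exact Nat.modEq_zero_iff_dvd.mpr dvd_rfl
  have hpos : 0 < #τ.supportᶜ := card_pos.mpr ⟨a, by simpa using ha⟩
  have : τ.supportᶜ = univ :=
    eq_univ_of_card _ ((card_le_univ _).antisymm (hcard ▸ Nat.le_of_dvd hpos hdvd))
  simpa using this

end Equiv.Perm

section

variable {α : Type*} [Fintype α] [DecidableEq α] {p : ℕ} [hp : Fact p.Prime]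

theorem Finset.prime_le_card_of_perm_smul_eq {σ : Perm α} (hσ : σ ^ p = 1) {s : Finset α}
    (hs : σ • s = s) {x : α} (hx : x ∈ s) (hσx : σ x ≠ x) : p ≤ #s := by
  have hmem : ∀ y, MulAction.toPerm σ y ∈ s ↔ y ∈ s := fun y => by
    conv_lhs => rw [← hs]
    exact smul_mem_smul_finset_iff σ
  have hτ1 : (MulAction.toPerm σ).subtypePerm hmem ≠ 1 := fun h =>
    hσx (congrArg Subtype.val (Perm.ext_iff.mp h ⟨x, hx⟩))
  simpa using
    Perm.le_card_of_pow_prime_eq_one (MulAction.subtypePerm_toPerm_pow_eq_one hσ hmem) hτ1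

namespace Finpartition

instance : SMul (Perm α) (Finpartition (univ : Finset α)) where
  smul σ P :=
    (P.map { toEquiv := MulAction.toPerm (α := Perm α) (β := Finset α) σ
             map_rel_iff' := smul_finset_subset_smul_finset_iff }).copy smul_finset_univ

theorem parts_perm_smul (σ : Perm α) (P : Finpartition (univ : Finset α)) :
    (σ • P).parts = σ • P.parts := by
  change P.parts.map _ = _
  rw [map_eq_image]
  rfl

instance : MulAction (Perm α) (Finpartition (univ : Finset α)) where
  one_smul P := Finpartition.ext <| by rw [parts_perm_smul, one_smul]
  mul_smul σ τ P := Finpartition.ext <| by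
    rw [parts_perm_smul, parts_perm_smul, parts_perm_smul, mul_smul]

/-- The permutation of the `p` parts induced by `σ` has order dividing `p` and fixes the part
of `a`. -/
theorem perm_smul_eq_of_mem_parts {σ : Perm α} (hσ : σ ^ p = 1)
    {P : Finpartition (univ : Finset α)} (hP : σ • P = P) (hcard : #P.parts = p) {a : α}
    (ha : σ a = a) {s : Finset α} (hs : s ∈ P.parts) : σ • s = s := by
  have hmem : ∀ t, MulAction.toPerm σ t ∈ P.parts ↔ t ∈ P.parts := fun t => by
    conv_lhs => rw [← hP, parts_perm_smul]
    exact smul_mem_smul_finset_iff σ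
  have hpart : σ • P.part a = P.part a := by
    refine (P.part_eq_of_mem ((hmem _).2 (P.part_mem.2 (mem_univ a))) ?_).symm
    simpa [ha] using smul_mem_smul_finset (a := σ) (P.mem_part (mem_univ a))
  have hτ := Perm.eq_one_of_pow_prime_eq_one_of_card_eq
    (MulAction.subtypePerm_toPerm_pow_eq_one hσ hmem) (by rwa [Fintype.card_coe])
    (a := ⟨P.part a, P.part_mem.2 (mem_univ a)⟩) (Subtype.ext hpart)
  exact congrArg Subtype.val (Perm.ext_iff.mp hτ ⟨s, hs⟩)

theorem prime_dvd_card_restricted {r : ℕ} (hr : r < p)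
    (hpα : p ≤ Fintype.card α) (hα : ¬p ∣ Fintype.card α) :
    p ∣ Nat.card {P : Finpartition (univ : Finset α) //
      #P.parts = p ∧ ∀ b ∈ P.parts, #b ≤ r} := by
  obtain ⟨σ, hσ⟩ := exists_prime_orderOf_dvd_card' (G := Perm α) p <| by
    rw [Nat.card_perm, Nat.card_eq_fintype_card]
    exact Nat.dvd_factorial hp.out.pos hpα
  have hσp : σ ^ p = 1 := hσ ▸ pow_orderOf_eq_one σ
  obtain ⟨x, hx⟩ : ∃ x, σ x ≠ x := by
    by_contra! h
    rw [(Perm.ext h : σ = 1), orderOf_one] at hσ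
    exact hp.out.one_lt.ne hσ
  obtain ⟨a, ha⟩ := Perm.exists_fixed_point_of_prime (n := 1) hα (by rwa [pow_one])
  have hinv : ∀ P : Finpartition (univ : Finset α),
      (#(MulAction.toPerm σ P).parts = p ∧ ∀ b ∈ (MulAction.toPerm σ P).parts, #b ≤ r) ↔
        (#P.parts = p ∧ ∀ b ∈ P.parts, #b ≤ r) := fun P => by
    rw [MulAction.toPerm_apply, parts_perm_smul, card_smul_finset]
    simp [smul_finset_def, card_image_of_injective _ σ.injective]
  by_contra hdvd
  rw [Nat.card_eq_fintype_card] at hdvd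
  obtain ⟨⟨P, hPcard, hPr⟩, hP⟩ := Perm.exists_fixed_point_of_prime (n := 1) hdvd
    (by rw [pow_one]; exact MulAction.subtypePerm_toPerm_pow_eq_one hσp hinv)
  have hPσ : σ • P = P := congrArg Subtype.val hP
  have hxP : p ≤ #(P.part x) := prime_le_card_of_perm_smul_eq hσp
    (P.perm_smul_eq_of_mem_parts hσp hPσ hPcard ha (P.part_mem.2 (mem_univ x)))
    (P.mem_part (mem_univ x)) hx
  exact (hPr _ (P.part_mem.2 (mem_univ x))).not_gt (hr.trans_le hxP)

end Finpartition

end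

theorem stmt_11_general (p r : ℕ) (hp : p.Prime) (h1 : 1 ≤ r) (h2 : r < p - 1) :
    p ∣ stirlingRes (r + p) p r := by
  have := Fact.mk hp
  refine Finpartition.prime_dvd_card_restricted (by omega) (by simp) ?_
  rw [Fintype.card_fin, Nat.dvd_add_self_right]
  exact Nat.not_dvd_of_pos_of_lt h1 (by omega)

theorem stmt_11 (p r : ℕ) (hp : p.Prime) (hodd : Odd p) (h1 : 1 ≤ r) (h2 : r < p - 1) :
    p ∣ stirlingRes (r + p) p r :=
  stmt_11_general p r hp h1 h2
end

section
/- Let p be a prime, i an integer with 1 ≤ i ≤ p-1, and k a positive integer. Then for every integer l ≥ k, the p-adic valuation of the rational number (k!/l!) · S(l,k)_{≤i} is nonnegative; equivalently, v_p(k! · S(l,k)_{≤i}) ≥ v_p(l!). -/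
open Finset MulAction Nat Function

theorem MulAction.pow_padicValNat_card_dvd_card {G X : Type*} [Group G]
    [MulAction G X] [Finite X] {p : ℕ} (hp : p.Prime)
    (h : ∀ x : X, ¬ p ∣ Nat.card (stabilizer G x)) :
    p ^ padicValNat p (Nat.card G) ∣ Nat.card X := by
  classical
  have := Fintype.ofFinite (Quotient (orbitRel G X))
  rw [Nat.card_congr (selfEquivSigmaOrbits G X), Nat.card_sigma]
  refine Finset.dvd_sum fun ω _ ↦ ?_
  have hcoprime : Nat.Coprime (p ^ padicValNat p (Nat.card G)) (Nat.card (stabilizer G ω.out)) :=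
    .pow_left _ ((Nat.Prime.coprime_iff_not_dvd hp).2 (h _))
  refine hcoprime.dvd_of_dvd_mul_right ?_
  rw [← Nat.card_prod, Nat.card_congr (orbitProdStabilizerEquivGroup G _)]
  exact pow_padicValNat_dvd

theorem Nat.Prime.not_dvd_prod_factorial {ι : Type*} {p : ℕ} (hp : p.Prime) {s : Finset ι}
    {c : ι → ℕ} (hc : ∀ i ∈ s, c i < p) : ¬ p ∣ ∏ i ∈ s, (c i)! := by
  simpa [hp.prime.dvd_finsetProd_iff, hp.dvd_factorial] using hc

theorem padicValRat_div_nonneg_of_dvd {p a b : ℕ} [Fact p.Prime] (hb : b ≠ 0)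
    (h : p ^ padicValNat p b ∣ a) : 0 ≤ padicValRat p (a / b) := by
  rcases eq_or_ne a 0 with rfl | ha
  · simp
  rw [padicValRat.div (by exact_mod_cast ha) (by exact_mod_cast hb), padicValRat.of_nat,
    padicValRat.of_nat, sub_nonneg]
  exact_mod_cast (padicValNat_dvd_iff_le ha).1 h

section FiberCard

variable {α β : Type*} [Fintype α] [DecidableEq β]

theorem DomMulAct.card_filter_smul_eq (g : (Equiv.Perm α)ᵈᵐᵃ) (f : α → β) (b : β) :
    #{a | (g • f) a = b} = #{a | f a = b} := by
  rw [← Fintype.card_subtype, ← Fintype.card_subtype]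
  exact Fintype.card_congr ((mk.symm g).subtypeEquiv fun _ ↦ Iff.rfl)

theorem DomMulAct.natCard_stabilizer [DecidableEq α] [Fintype β] (f : α → β) :
    Nat.card (stabilizer (Equiv.Perm α)ᵈᵐᵃ f) = ∏ b, (#{a | f a = b})! := by
  rw [Nat.card_congr (Equiv.subtypeEquiv (q := fun g : Equiv.Perm α ↦ f ∘ g = f) mk.symm
      fun _ ↦ mem_stabilizer_iff), Nat.card_eq_fintype_card, stabilizer_card]
  simp_rw [Fintype.card_subtype]

variable (α β) in
def fiberCardSubMulAction (s : Set ℕ) : SubMulAction (Equiv.Perm α)ᵈᵐᵃ (α → β) where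
  carrier := {f | ∀ b, #{a | f a = b} ∈ s}
  smul_mem' g f hf b := by
    rw [DomMulAct.card_filter_smul_eq]
    exact hf b

theorem pow_padicValNat_factorial_dvd_card_fiberCardSubMulAction [Fintype β] {p : ℕ}
    (hp : p.Prime) {s : Set ℕ} (hs : ∀ n ∈ s, n < p) :
    p ^ padicValNat p (Fintype.card α)! ∣ Nat.card (fiberCardSubMulAction α β s) := by
  classical
  have hG : Nat.card (Equiv.Perm α)ᵈᵐᵃ = (Fintype.card α)! := by
    rw [Nat.card_congr DomMulAct.mk.symm, Nat.card_perm, Nat.card_eq_fintype_card]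
  rw [← hG]
  refine MulAction.pow_padicValNat_card_dvd_card hp fun f ↦ ?_
  rw [SubMulAction.stabilizer_of_subMul, DomMulAct.natCard_stabilizer]
  exact hp.not_dvd_prod_factorial fun b _ ↦ hs _ (f.2 b)

end FiberCard

section LabelledPartition

variable {α β : Type*} [Fintype α] [DecidableEq α]

namespace Finpartition

def labelFun (P : Finpartition (univ : Finset α)) (e : P.parts ≃ β) (a : α) : β :=
  e ⟨P.part a, P.part_mem.2 (mem_univ a)⟩

theorem filter_labelFun_eq [DecidableEq β] (P : Finpartition (univ : Finset α))
    (e : P.parts ≃ β) (b : β) :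
    ({a | P.labelFun e a = b} : Finset α) = e.symm b := by
  ext a
  rw [mem_filter, labelFun, ← Equiv.eq_symm_apply, Subtype.ext_iff,
    P.part_eq_iff_mem (e.symm b).2]
  simp

theorem parts_eq_image_symm [Fintype β] (P : Finpartition (univ : Finset α)) (e : P.parts ≃ β) :
    P.parts = univ.image fun b ↦ (e.symm b : Finset α) := by
  ext t
  refine ⟨fun ht ↦ mem_image.2 ⟨e ⟨t, ht⟩, mem_univ _, by simp⟩, ?_⟩
  intro ht
  obtain ⟨b, -, rfl⟩ := mem_image.1 ht
  exact (e.symm b).2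

theorem part_ofSetoid_ker_eq_iff [DecidableEq β] (f : α → β) {x y : α} :
    (ofSetoid (Setoid.ker f)).part x = (ofSetoid (Setoid.ker f)).part y ↔ f x = f y := by
  rw [← mem_part_iff_part_eq_part _ (mem_univ x) (mem_univ y), mem_part_ofSetoid_iff_rel]
  exact eq_comm

theorem exists_labelFun_eq [DecidableEq β] {f : α → β} (hf : Surjective f) :
    ∃ (P : Finpartition (univ : Finset α)) (e : P.parts ≃ β), P.labelFun e = f := by
  set P := ofSetoid (Setoid.ker f)
  let g (b : β) : P.parts := ⟨P.part (surjInv hf b), P.part_mem.2 (mem_univ _)⟩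
  have hg : Bijective g := by
    refine ⟨fun b b' h ↦ ?_, fun ⟨t, ht⟩ ↦ ?_⟩
    · simpa [surjInv_eq] using (part_ofSetoid_ker_eq_iff f).1 (congrArg Subtype.val h)
    · obtain ⟨a, -, rfl⟩ := P.part_surjOn ht
      exact ⟨f a, Subtype.ext ((part_ofSetoid_ker_eq_iff f).2 (surjInv_eq hf _))⟩
  refine ⟨P, (Equiv.ofBijective g hg).symm, funext fun a ↦ ?_⟩
  rw [labelFun, Equiv.symm_apply_eq]
  exact Subtype.ext ((part_ofSetoid_ker_eq_iff f).2 (surjInv_eq hf _)).symm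

end Finpartition

variable (α β) in
abbrev partitionsWithCards [Fintype β] (s : Set ℕ) : Type _ :=
  {P : Finpartition (univ : Finset α) // #P.parts = Fintype.card β ∧ ∀ t ∈ P.parts, #t ∈ s}

variable [Fintype β] [DecidableEq β] {s : Set ℕ}

def labelledMap (x : Σ P : partitionsWithCards α β s, P.1.parts ≃ β) :
    fiberCardSubMulAction α β s :=
  ⟨x.1.1.labelFun x.2, fun b ↦ by
    rw [Finpartition.filter_labelFun_eq]
    exact x.1.2.2 _ (x.2.symm b).2⟩

theorem labelledMap_injective : Injective (labelledMap (α := α) (β := β) (s := s)) := by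
  rintro ⟨⟨P, hP⟩, e⟩ ⟨⟨P', hP'⟩, e'⟩ h
  have hsymm (b : β) : (e.symm b : Finset α) = e'.symm b := by
    have hfun : P.labelFun e = P'.labelFun e' := congrArg Subtype.val h
    rw [← P.filter_labelFun_eq, ← P'.filter_labelFun_eq, hfun]
  obtain rfl : P = P' := by
    ext1
    rw [P.parts_eq_image_symm e, P'.parts_eq_image_symm e']
    simp only [hsymm]
  obtain rfl : e = e' :=
    Equiv.symm_bijective.injective (Equiv.ext fun b ↦ Subtype.ext (hsymm b))
  rfl

theorem labelledMap_surjective (hs : 0 ∉ s) :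
    Surjective (labelledMap (α := α) (β := β) (s := s)) := by
  rintro ⟨f, hf⟩
  have hsurj : Surjective f := fun b ↦ by
    obtain ⟨a, ha⟩ := card_pos.1 (Nat.pos_of_ne_zero fun h ↦ hs (h ▸ hf b))
    exact ⟨a, (mem_filter.1 ha).2⟩
  obtain ⟨P, e, rfl⟩ := Finpartition.exists_labelFun_eq hsurj
  refine ⟨⟨⟨P, by rw [← Fintype.card_coe, Fintype.card_congr e], fun t ht ↦ ?_⟩, e⟩, rfl⟩
  simpa [Finpartition.filter_labelFun_eq] using hf (e ⟨t, ht⟩)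

theorem card_fiberCardSubMulAction (hs : 0 ∉ s) :
    Nat.card (fiberCardSubMulAction α β s) =
      Nat.card (partitionsWithCards α β s) * (Fintype.card β)! := by
  classical
  have hequiv (P : partitionsWithCards α β s) : Nat.card (P.1.parts ≃ β) = (Fintype.card β)! := by
    rw [Nat.card_eq_fintype_card, Fintype.card_equiv (Fintype.equivOfCardEq (by simp [P.2.1])),
      Fintype.card_coe, P.2.1]
  have hbij : Bijective (labelledMap (α := α) (β := β) (s := s)) :=
    ⟨labelledMap_injective, labelledMap_surjective hs⟩
  rw [← Nat.card_congr (Equiv.ofBijective _ hbij), Nat.card_sigma,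
    sum_congr rfl fun P _ ↦ hequiv P, sum_const, Finset.card_univ, smul_eq_mul,
    Nat.card_eq_fintype_card]

end LabelledPartition

theorem stirlingRes_eq_card_partitionsWithCards (l k i : ℕ) :
    stirlingRes l k i = Nat.card (partitionsWithCards (Fin l) (Fin k) (Set.Icc 1 i)) := by
  refine Nat.card_congr (Equiv.subtypeEquivRight fun P ↦ ?_)
  refine and_congr (by rw [Fintype.card_fin]) (forall₂_congr fun t ht ↦ ?_)
  simp [P.nonempty_of_mem_parts ht]

theorem stmt_12_general (p i k l : ℕ) (hp : p.Prime) (hi2 : i ≤ p - 1) :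
    0 ≤ padicValRat p (((Nat.factorial k) * stirlingRes l k i : ℚ) / (Nat.factorial l : ℚ)) := by
  have := Fact.mk hp
  have hcard : Nat.card (fiberCardSubMulAction (Fin l) (Fin k) (Set.Icc 1 i)) =
      k ! * stirlingRes l k i := by
    rw [card_fiberCardSubMulAction (by simp), ← stirlingRes_eq_card_partitionsWithCards,
      Fintype.card_fin, mul_comm]
  have hsmall : ∀ n ∈ Set.Icc 1 i, n < p := fun n hn ↦ by
    have := hp.two_le
    grind
  have hdvd : p ^ padicValNat p l ! ∣ k ! * stirlingRes l k i := by
    simpa [hcard] using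
      pow_padicValNat_factorial_dvd_card_fiberCardSubMulAction (α := Fin l) (β := Fin k) hp hsmall
  exact_mod_cast padicValRat_div_nonneg_of_dvd (factorial_ne_zero l) hdvd

theorem stmt_12 (p i k l : ℕ) (hp : p.Prime) (hi1 : 1 ≤ i) (hi2 : i ≤ p - 1)
    (hk : 0 < k) (hl : k ≤ l) :
    0 ≤ padicValRat p (((Nat.factorial k) * stirlingRes l k i : ℚ) / (Nat.factorial l : ℚ)) :=
  stmt_12_general p i k l hp hi2
end

section
/- Let p be a prime and let i, t be integers with 1 ≤ t ≤ i ≤ p-1. Then S(i+p, t+p) ≡ S(i+1, t+p) + S(i, t) (mod p), and since i+1 < t+p this simplifies to S(i+p, t+p) ≡ S(i,t) (mod p). -/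
namespace StirlingAux

open Finset
set_option linter.unusedSectionVars false
set_option maxHeartbeats 1000000

variable {α : Type*} {β : Type*} [DecidableEq α] [DecidableEq β]


def IsPartSet (s : Finset α) (C : Finset (Finset α)) : Prop :=
  (∀ t ∈ C, t ⊆ s) ∧ ∅ ∉ C ∧ ∀ x ∈ s, ∃! t, t ∈ C ∧ x ∈ t

noncomputable def SP (s : Finset α) (k : ℕ) : Finset (Finset (Finset α)) := by
  classical exact s.powerset.powerset.filter (fun C => IsPartSet s C ∧ C.card = k)

lemma mem_SP {s : Finset α} {k : ℕ} {C : Finset (Finset α)} :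
    C ∈ SP s k ↔ IsPartSet s C ∧ C.card = k := by
  classical
  simp only [SP, mem_filter, mem_powerset, and_iff_right_iff_imp]
  rintro ⟨h1, -⟩ t ht
  exact mem_powerset.mpr (h1.1 t ht)

lemma IsPartSet.disj {s : Finset α} {C : Finset (Finset α)} (h : IsPartSet s C)
    {t u : Finset α} (ht : t ∈ C) (hu : u ∈ C) {x : α} (hxt : x ∈ t) (hxu : x ∈ u) : t = u := by
  have hxs : x ∈ s := h.1 t ht hxt
  obtain ⟨v, -, hv⟩ := h.2.2 x hxs
  rw [hv t ⟨ht, hxt⟩, hv u ⟨hu, hxu⟩]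

lemma IsPartSet.nonempty {s : Finset α} {C : Finset (Finset α)} (h : IsPartSet s C)
    {t : Finset α} (ht : t ∈ C) : t.Nonempty :=
  Finset.nonempty_iff_ne_empty.mpr (fun he => h.2.1 (he ▸ ht))

section rec
variable {a : α} {s : Finset α} {k : ℕ}

/-- Facts about a partition of `insert a s` in which `{a}` is not a part. -/
lemma erase_a_facts (ha : a ∉ s) {C : Finset (Finset α)} (hC : IsPartSet (insert a s) C)
    (hsing : {a} ∉ C) {t : Finset α} (ht : t ∈ C) :
    t.erase a ⊆ s ∧ (t.erase a).Nonempty := by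
  constructor
  · intro x hx
    have := hC.1 t ht (Finset.mem_of_mem_erase hx)
    rcases Finset.mem_insert.mp this with h | h
    · exact absurd h (Finset.ne_of_mem_erase hx)
    · exact h
  · by_cases hat : a ∈ t
    · have hne : t ≠ {a} := fun h => hsing (h ▸ ht)
      have hlt : 1 < t.card := by
        rcases Nat.lt_or_ge 1 t.card with h | h
        · exact h
        · exfalso
          obtain ⟨b, hb⟩ := Finset.card_eq_one.mp
            (le_antisymm h (Finset.one_le_card.mpr ⟨a, hat⟩))
          rw [hb] at hat
          exact hne (by rw [hb, Finset.mem_singleton.mp hat])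
      obtain ⟨x, hxt, hxa⟩ := Finset.exists_mem_ne hlt a
      exact ⟨x, Finset.mem_erase.mpr ⟨hxa, hxt⟩⟩
    · rw [Finset.erase_eq_of_notMem hat]
      exact hC.nonempty ht

lemma erase_a_injOn (ha : a ∉ s) {C : Finset (Finset α)} (hC : IsPartSet (insert a s) C)
    (hsing : {a} ∉ C) {t₁ t₂ : Finset α} (h₁ : t₁ ∈ C) (h₂ : t₂ ∈ C)
    (he : t₁.erase a = t₂.erase a) : t₁ = t₂ := by
  by_cases ha1 : a ∈ t₁ <;> by_cases ha2 : a ∈ t₂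
  · exact hC.disj h₁ h₂ ha1 ha2
  · exfalso
    obtain ⟨x, hx⟩ := (erase_a_facts ha hC hsing h₁).2
    rw [he, Finset.erase_eq_of_notMem ha2] at hx
    have hx1 : x ∈ t₁ := by
      have : x ∈ t₁.erase a := by rw [he, Finset.erase_eq_of_notMem ha2]; exact hx
      exact Finset.mem_of_mem_erase this
    exact ha2 (hC.disj h₁ h₂ hx1 hx ▸ ha1)
  · exfalso
    obtain ⟨x, hx⟩ := (erase_a_facts ha hC hsing h₂).2
    rw [← he, Finset.erase_eq_of_notMem ha1] at hx
    have hx2 : x ∈ t₂ := by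
      have : x ∈ t₂.erase a := by rw [← he, Finset.erase_eq_of_notMem ha1]; exact hx
      exact Finset.mem_of_mem_erase this
    exact ha1 (hC.disj h₂ h₁ hx2 hx ▸ ha2)
  · rwa [Finset.erase_eq_of_notMem ha1, Finset.erase_eq_of_notMem ha2] at he

/-- The restriction map: remove `a` from every part. -/
lemma pi_mem (ha : a ∉ s) {C : Finset (Finset α)} (hC : C ∈ SP (insert a s) (k+1))
    (hsing : {a} ∉ C) : C.image (fun t => t.erase a) ∈ SP s (k+1) := by
  obtain ⟨hP, hcard⟩ := mem_SP.mp hC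
  refine mem_SP.mpr ⟨⟨?_, ?_, ?_⟩, ?_⟩
  · rintro u hu
    obtain ⟨t, htC, rfl⟩ := mem_image.mp hu
    exact (erase_a_facts ha hP hsing htC).1
  · intro h
    obtain ⟨t, htC, ht⟩ := mem_image.mp h
    exact Finset.not_nonempty_empty (ht ▸ (erase_a_facts ha hP hsing htC).2)
  · rintro x hx
    have hxa : x ≠ a := fun h => ha (h ▸ hx)
    obtain ⟨t, ⟨htC, hxt⟩, ht⟩ := hP.2.2 x (Finset.mem_insert_of_mem hx)
    refine ⟨t.erase a, ⟨mem_image_of_mem _ htC, Finset.mem_erase.mpr ⟨hxa, hxt⟩⟩, ?_⟩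
    rintro u ⟨huC, hxu⟩
    obtain ⟨t', ht'C, rfl⟩ := mem_image.mp huC
    rw [ht t' ⟨ht'C, Finset.mem_of_mem_erase hxu⟩]
  · rw [Finset.card_image_of_injOn (fun t₁ h₁ t₂ h₂ => erase_a_injOn ha hP hsing h₁ h₂), hcard]

/-- The canonical description of (the erased) part of `a`. -/
lemma jC_eq (ha : a ∉ s) {C : Finset (Finset α)} (hP : IsPartSet (insert a s) C)
    {T : Finset α} (hT : T ∈ C) (haT : a ∈ T) :
    s.filter (fun x => ∃ t ∈ C, a ∈ t ∧ x ∈ t) = T.erase a := by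
  ext x
  simp only [mem_filter, Finset.mem_erase]
  constructor
  · rintro ⟨hxs, t, htC, hat, hxt⟩
    have := hP.disj htC hT hat haT
    exact ⟨fun h => ha (h ▸ hxs), this ▸ hxt⟩
  · rintro ⟨hxa, hxT⟩
    have hxs : x ∈ s := by
      rcases Finset.mem_insert.mp (hP.1 T hT hxT) with h | h
      · exact absurd h hxa
      · exact h
    exact ⟨hxs, T, hT, haT, hxT⟩

lemma i_mem (ha : a ∉ s) {D : Finset (Finset α)} (hD : D ∈ SP s (k+1)) {t : Finset α}
    (htD : t ∈ D) :
    insert (insert a t) (D.erase t) ∈ SP (insert a s) (k+1) ∧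
      {a} ∉ insert (insert a t) (D.erase t) ∧
      (insert (insert a t) (D.erase t)).image (fun u => u.erase a) = D := by
  obtain ⟨hP, hcard⟩ := mem_SP.mp hD
  have hts : t ⊆ s := hP.1 t htD
  have hat : a ∉ t := fun h => ha (hts h)
  have hins : insert a t ∉ D.erase t := fun h => ha (hP.1 _ (Finset.mem_of_mem_erase h)
    (Finset.mem_insert_self a t))
  have hnotmem : ∀ u ∈ D, a ∉ u := fun u hu h => ha (hP.1 u hu h)
  refine ⟨mem_SP.mpr ⟨⟨?_, ?_, ?_⟩, ?_⟩, ?_, ?_⟩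
  · rintro u hu
    rcases Finset.mem_insert.mp hu with rfl | hu
    · exact Finset.insert_subset_insert a hts
    · exact (hP.1 u (Finset.mem_of_mem_erase hu)).trans (Finset.subset_insert a s)
  · intro h
    rcases Finset.mem_insert.mp h with h | h
    · exact (Finset.insert_ne_empty a t) h.symm
    · exact hP.2.1 (Finset.mem_of_mem_erase h)
  · rintro x hx
    rcases Finset.mem_insert.mp hx with hxa | hxs
    · refine ⟨insert a t, ⟨Finset.mem_insert_self _ _, Finset.mem_insert.mpr (Or.inl hxa)⟩, ?_⟩
      rintro u ⟨huC, hau⟩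
      rcases Finset.mem_insert.mp huC with rfl | hu
      · rfl
      · exact absurd (hxa ▸ hau) (hnotmem u (Finset.mem_of_mem_erase hu))
    · have hxa : x ≠ a := fun h => ha (h ▸ hxs)
      obtain ⟨u₀, ⟨hu₀D, hxu₀⟩, hu₀⟩ := hP.2.2 x hxs
      by_cases h0 : u₀ = t
      · subst h0
        refine ⟨insert a u₀, ⟨Finset.mem_insert_self _ _, Finset.mem_insert_of_mem hxu₀⟩, ?_⟩
        rintro v ⟨hvC, hxv⟩
        rcases Finset.mem_insert.mp hvC with rfl | hv
        · rfl
        · exact absurd (Finset.ne_of_mem_erase hv) (by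
            rw [hu₀ _ ⟨Finset.mem_of_mem_erase hv, hxv⟩]; simp)
      · refine ⟨u₀, ⟨Finset.mem_insert_of_mem (Finset.mem_erase.mpr ⟨h0, hu₀D⟩), hxu₀⟩, ?_⟩
        rintro v ⟨hvC, hxv⟩
        rcases Finset.mem_insert.mp hvC with rfl | hv
        · exfalso
          rcases Finset.mem_insert.mp hxv with hxa2 | hxt
          · exact hxa hxa2
          · exact h0 (hu₀ t ⟨htD, hxt⟩).symm
        · exact hu₀ v ⟨Finset.mem_of_mem_erase hv, hxv⟩
  · rw [Finset.card_insert_of_notMem hins, Finset.card_erase_of_mem htD, hcard]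
    simp
  · intro h
    rcases Finset.mem_insert.mp h with h | h
    · have : t ⊆ ({a} : Finset α) := h ▸ Finset.subset_insert a t
      obtain ⟨x, hx⟩ := hP.nonempty htD
      have := Finset.mem_singleton.mp (this hx)
      exact hat (this ▸ hx)
    · exact ha (hP.1 _ (Finset.mem_of_mem_erase h) (Finset.mem_singleton_self a))
  · rw [Finset.image_insert, Finset.erase_insert hat]
    have h2 : ∀ u ∈ D.erase t, (fun u => u.erase a) u = id u := fun u hu =>
      Finset.erase_eq_of_notMem (hnotmem u (Finset.mem_of_mem_erase hu))
    rw [Finset.image_congr h2, Finset.image_id, Finset.insert_erase htD]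


section transport
variable {f : α → β} {s : Finset α} {k : ℕ}

lemma filter_image_eq (hf : Function.Injective f) {t : Finset α} (hts : t ⊆ s) :
    s.filter (fun x => f x ∈ t.image f) = t := by
  ext x
  simp only [mem_filter, mem_image]
  constructor
  · rintro ⟨-, x', hx', hfx⟩; rwa [← hf hfx]
  · intro hx; exact ⟨hts hx, x, hx, rfl⟩

lemma image_filter_eq {u : Finset β} (hu : u ⊆ s.image f) :
    (s.filter (fun x => f x ∈ u)).image f = u := by
  ext y
  simp only [mem_image, mem_filter]
  constructor
  · rintro ⟨x, ⟨-, hxu⟩, rfl⟩; exact hxu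
  · intro hy
    obtain ⟨x, hxs, rfl⟩ := mem_image.mp (hu hy)
    exact ⟨x, ⟨hxs, hy⟩, rfl⟩

lemma Bwd_Fwd_eq (hf : Function.Injective f) {C : Finset (Finset α)} (hsub : ∀ t ∈ C, t ⊆ s) :
    (C.image (fun t => t.image f)).image (fun u => s.filter (fun x => f x ∈ u)) = C := by
  rw [Finset.image_image]
  have : ∀ t ∈ C, ((fun u => s.filter (fun x => f x ∈ u)) ∘ (fun t => t.image f)) t = id t :=
    fun t ht => filter_image_eq hf (hsub t ht)
  rw [Finset.image_congr this, Finset.image_id]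

lemma Fwd_Bwd_eq {D : Finset (Finset β)} (hsub : ∀ u ∈ D, u ⊆ s.image f) :
    (D.image (fun u => s.filter (fun x => f x ∈ u))).image (fun t => t.image f) = D := by
  rw [Finset.image_image]
  have : ∀ u ∈ D, ((fun t => t.image f) ∘ (fun u => s.filter (fun x => f x ∈ u))) u = id u :=
    fun u hu => image_filter_eq (hsub u hu)
  rw [Finset.image_congr this, Finset.image_id]

lemma Fwd_mem (hf : Function.Injective f) {C : Finset (Finset α)} (hC : C ∈ SP s k) :
    C.image (fun t => t.image f) ∈ SP (s.image f) k := by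
  obtain ⟨⟨hsub, hne, huniq⟩, hcard⟩ := mem_SP.mp hC
  refine mem_SP.mpr ⟨⟨?_, ?_, ?_⟩, ?_⟩
  · rintro u hu
    obtain ⟨t, htC, rfl⟩ := mem_image.mp hu
    exact image_subset_image (hsub t htC)
  · intro h
    obtain ⟨t, htC, ht⟩ := mem_image.mp h
    exact hne (by rwa [image_eq_empty.mp ht] at htC)
  · rintro y hy
    obtain ⟨x, hxs, rfl⟩ := mem_image.mp hy
    obtain ⟨t, ⟨htC, hxt⟩, ht⟩ := huniq x hxs
    refine ⟨t.image f, ⟨mem_image_of_mem _ htC, mem_image_of_mem f hxt⟩, ?_⟩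
    rintro u ⟨huC, hyu⟩
    obtain ⟨t', ht'C, rfl⟩ := mem_image.mp huC
    obtain ⟨x', hx't', hfx⟩ := mem_image.mp hyu
    rw [ht t' ⟨ht'C, by rwa [← hf hfx]⟩]
  · rw [Finset.card_image_of_injective _ (Finset.image_injective hf), hcard]

lemma Bwd_mem {D : Finset (Finset β)} (hD : D ∈ SP (s.image f) k) :
    D.image (fun u => s.filter (fun x => f x ∈ u)) ∈ SP s k := by
  obtain ⟨⟨hsub, hne, huniq⟩, hcard⟩ := mem_SP.mp hD
  have hFB := Fwd_Bwd_eq hsub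
  refine mem_SP.mpr ⟨⟨?_, ?_, ?_⟩, ?_⟩
  · rintro t ht
    obtain ⟨u, -, rfl⟩ := mem_image.mp ht
    exact filter_subset _ _
  · intro h
    obtain ⟨u, huD, hu⟩ := mem_image.mp h
    have : u = ∅ := by
      rw [← image_filter_eq (f := f) (hsub u huD), hu, image_empty]
    exact hne (this ▸ huD)
  · rintro x hx
    obtain ⟨u, ⟨huD, hfxu⟩, hu⟩ := huniq (f x) (mem_image_of_mem f hx)
    refine ⟨s.filter (fun y => f y ∈ u), ⟨mem_image_of_mem _ huD, mem_filter.mpr ⟨hx, hfxu⟩⟩, ?_⟩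
    rintro t ⟨htB, hxt⟩
    obtain ⟨u', hu'D, rfl⟩ := mem_image.mp htB
    rw [hu u' ⟨hu'D, (mem_filter.mp hxt).2⟩]
  · refine le_antisymm (hcard ▸ card_image_le) ?_
    have : D.card ≤ (D.image (fun u => s.filter (fun x => f x ∈ u))).card := by
      conv_lhs => rw [← hFB]
      exact card_image_le
    exact hcard ▸ this

lemma SP_image_card (hf : Function.Injective f) (s : Finset α) (k : ℕ) :
    (SP (s.image f) k).card = (SP s k).card := by
  refine Finset.card_nbij' (fun D => D.image (fun u => s.filter (fun x => f x ∈ u)))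
    (fun C => C.image (fun t => t.image f)) (fun D hD => Bwd_mem hD)
    (fun C hC => Fwd_mem hf hC) ?_ ?_
  · intro D hD
    exact Fwd_Bwd_eq (mem_SP.mp hD).1.1
  · intro C hC
    exact Bwd_Fwd_eq hf (mem_SP.mp hC).1.1
end transport

lemma A1_card (ha : a ∉ s) (k : ℕ) :
    ((SP (insert a s) (k+1)).filter (fun C => {a} ∈ C)).card = (SP s k).card := by
  classical
  refine Finset.card_nbij' (fun C => C.erase {a}) (fun D => insert {a} D) ?_ ?_ ?_ ?_
  · rintro C hC
    obtain ⟨hCA, hs⟩ := mem_filter.mp hC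
    obtain ⟨hP, hcard⟩ := mem_SP.mp hCA
    refine mem_SP.mpr ⟨⟨?_, ?_, ?_⟩, ?_⟩
    · rintro t ht x hx
      have htC := Finset.mem_of_mem_erase ht
      have htne := Finset.ne_of_mem_erase ht
      rcases Finset.mem_insert.mp (hP.1 t htC hx) with rfl | h
      · exact absurd (hP.disj htC hs hx (Finset.mem_singleton_self x)) htne
      · exact h
    · intro h
      exact hP.2.1 (Finset.mem_of_mem_erase h)
    · rintro x hx
      have hxa : x ≠ a := fun h => ha (h ▸ hx)
      obtain ⟨t, ⟨htC, hxt⟩, ht⟩ := hP.2.2 x (Finset.mem_insert_of_mem hx)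
      have htne : t ≠ {a} := fun h => hxa (Finset.mem_singleton.mp (h ▸ hxt))
      refine ⟨t, ⟨Finset.mem_erase.mpr ⟨htne, htC⟩, hxt⟩, ?_⟩
      rintro u ⟨huE, hxu⟩
      exact ht u ⟨Finset.mem_of_mem_erase huE, hxu⟩
    · rw [Finset.card_erase_of_mem hs, hcard]
      omega
  · rintro D hD
    obtain ⟨hP, hcard⟩ := mem_SP.mp hD
    have hsing : ({a} : Finset α) ∉ D := fun h => ha (hP.1 _ h (Finset.mem_singleton_self a))
    refine mem_filter.mpr ⟨mem_SP.mpr ⟨⟨?_, ?_, ?_⟩, ?_⟩, Finset.mem_insert_self _ _⟩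
    · rintro t ht
      rcases Finset.mem_insert.mp ht with rfl | h
      · exact Finset.singleton_subset_iff.mpr (Finset.mem_insert_self a s)
      · exact (hP.1 t h).trans (Finset.subset_insert a s)
    · intro h
      rcases Finset.mem_insert.mp h with h | h
      · exact (Finset.singleton_ne_empty a) h.symm
      · exact hP.2.1 h
    · rintro x hx
      rcases Finset.mem_insert.mp hx with hxa | hxs
      · refine ⟨{a}, ⟨Finset.mem_insert_self _ _, Finset.mem_singleton.mpr hxa⟩, ?_⟩
        rintro u ⟨huC, hxu⟩
        rcases Finset.mem_insert.mp huC with rfl | hu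
        · rfl
        · exact absurd (hxa ▸ hxu) (fun h => ha (hP.1 u hu h))
      · have hxa : x ≠ a := fun h => ha (h ▸ hxs)
        obtain ⟨t, ⟨htD, hxt⟩, ht⟩ := hP.2.2 x hxs
        refine ⟨t, ⟨Finset.mem_insert_of_mem htD, hxt⟩, ?_⟩
        rintro u ⟨huC, hxu⟩
        rcases Finset.mem_insert.mp huC with rfl | hu
        · exact absurd (Finset.mem_singleton.mp hxu) hxa
        · exact ht u ⟨hu, hxu⟩
    · rw [Finset.card_insert_of_notMem hsing, hcard]
  · rintro C hC
    exact Finset.insert_erase (mem_filter.mp hC).2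
  · rintro D hD
    obtain ⟨hP, -⟩ := mem_SP.mp hD
    exact Finset.erase_insert (fun h => ha (hP.1 _ h (Finset.mem_singleton_self a)))

lemma A2_card (ha : a ∉ s) (k : ℕ) :
    ((SP (insert a s) (k+1)).filter (fun C => {a} ∉ C)).card = (k+1) * (SP s (k+1)).card := by
  classical
  set A2 := (SP (insert a s) (k+1)).filter (fun C => ({a} : Finset α) ∉ C) with hA2
  have Hπ : ∀ C ∈ A2, C.image (fun t => t.erase a) ∈ SP s (k+1) := by
    rintro C hC
    obtain ⟨hCA, hs⟩ := mem_filter.mp hC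
    exact pi_mem ha hCA hs
  rw [Finset.card_eq_sum_card_fiberwise Hπ]
  have hfib : ∀ D ∈ SP s (k+1),
      (A2.filter (fun C => C.image (fun t => t.erase a) = D)).card = k + 1 := by
    rintro D hD
    obtain ⟨hPD, hcardD⟩ := mem_SP.mp hD
    have : D.card = (A2.filter (fun C => C.image (fun t => t.erase a) = D)).card := by
      refine Finset.card_nbij' (fun t => insert (insert a t) (D.erase t))
        (fun C => s.filter (fun x => ∃ t ∈ C, a ∈ t ∧ x ∈ t)) ?_ ?_ ?_ ?_
      · rintro t htD
        obtain ⟨h1, h2, h3⟩ := i_mem ha hD htD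
        exact mem_filter.mpr ⟨mem_filter.mpr ⟨h1, h2⟩, h3⟩
      · rintro C hC
        obtain ⟨hCA2, hπ⟩ := mem_filter.mp hC
        obtain ⟨hCA, hsing⟩ := mem_filter.mp hCA2
        obtain ⟨hP, -⟩ := mem_SP.mp hCA
        obtain ⟨T, ⟨hTC, haT⟩, -⟩ := hP.2.2 a (Finset.mem_insert_self a s)
        dsimp only
        rw [jC_eq ha hP hTC haT, ← hπ]
        exact mem_image_of_mem _ hTC
      · rintro t htD
        obtain ⟨h1, h2, -⟩ := i_mem ha hD htD
        obtain ⟨hP, -⟩ := mem_SP.mp h1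
        have hat : a ∉ t := fun h => ha (hPD.1 t htD h)
        dsimp only
        rw [jC_eq ha hP (Finset.mem_insert_self _ _) (Finset.mem_insert_self a t),
          Finset.erase_insert hat]
      · rintro C hC
        obtain ⟨hCA2, hπ⟩ := mem_filter.mp hC
        obtain ⟨hCA, hsing⟩ := mem_filter.mp hCA2
        obtain ⟨hP, -⟩ := mem_SP.mp hCA
        obtain ⟨T, ⟨hTC, haT⟩, hTu⟩ := hP.2.2 a (Finset.mem_insert_self a s)
        dsimp only
        rw [jC_eq ha hP hTC haT]
        have ht0 : insert a (T.erase a) = T := Finset.insert_erase haT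
        have hnotmem : ∀ u ∈ C.erase T, a ∉ u := fun u hu h =>
          (Finset.ne_of_mem_erase hu) (hTu u ⟨Finset.mem_of_mem_erase hu, h⟩)
        have hD2 : D = insert (T.erase a) (C.erase T) := by
          rw [← hπ]
          conv_lhs => rw [← Finset.insert_erase hTC]
          rw [Finset.image_insert]
          have h2 : ∀ u ∈ C.erase T, (fun u => u.erase a) u = id u := fun u hu =>
            Finset.erase_eq_of_notMem (hnotmem u hu)
          rw [Finset.image_congr h2, Finset.image_id]
        have ht0notin : T.erase a ∉ C.erase T := by
          intro h
          obtain ⟨x, hx⟩ := (erase_a_facts ha hP hsing hTC).2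
          exact (Finset.ne_of_mem_erase h)
            (hP.disj (Finset.mem_of_mem_erase h) hTC hx (Finset.mem_of_mem_erase hx))
        rw [hD2, Finset.erase_insert ht0notin, ht0, Finset.insert_erase hTC]
    rw [← this, hcardD]
  rw [Finset.sum_congr rfl hfib, Finset.sum_const, smul_eq_mul, Nat.mul_comm]

lemma SP_insert_card (ha : a ∉ s) (k : ℕ) :
    (SP (insert a s) (k+1)).card = (k+1) * (SP s (k+1)).card + (SP s k).card := by
  classical
  rw [← Finset.card_filter_add_card_filter_not
    (p := fun C => ({a} : Finset α) ∉ C) (s := SP (insert a s) (k+1))]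
  have h2 : ((SP (insert a s) (k+1)).filter (fun C => ¬({a} : Finset α) ∉ C)).card
      = ((SP (insert a s) (k+1)).filter (fun C => ({a} : Finset α) ∈ C)).card := by
    congr 1
    apply Finset.filter_congr
    intro C _
    simp
  rw [A2_card ha k, h2, A1_card ha k]
end rec



def St : ℕ → ℕ → ℕ
  | 0, 0 => 1
  | 0, _+1 => 0
  | _+1, 0 => 0
  | n+1, k+1 => (k+1) * St n (k+1) + St n k

lemma St_eq_zero : ∀ n k, n < k → St n k = 0 := by
  intro n
  induction n with
  | zero => intro k hk; cases k with
    | zero => omega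
    | succ k => rfl
  | succ n ih =>
    intro k hk
    cases k with
    | zero => omega
    | succ k =>
      show (k+1) * St n (k+1) + St n k = 0
      rw [ih (k+1) (by omega), ih k (by omega)]
      ring

lemma St_diag : ∀ n, St n n = 1 := by
  intro n
  induction n with
  | zero => rfl
  | succ n ih =>
    show (n+1) * St n (n+1) + St n n = 1
    rw [St_eq_zero n (n+1) (by omega), ih]
    ring

lemma St_one (k : ℕ) : St 1 k = if k = 1 then 1 else 0 := by
  match k with
  | 0 => rfl
  | 1 => rfl
  | k+2 =>
    show (k+2) * St 0 (k+2) + St 0 (k+1) = _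
    simp [St]

lemma St_formula : ∀ n m : ℕ, (m.factorial : ℤ) * St n m =
    ∑ j ∈ range (m+1), (-1)^(m-j) * (m.choose j) * (j : ℤ)^n := by
  intro n
  induction n with
  | zero =>
    intro m
    match m with
    | 0 => simp [St]
    | k+1 =>
      rw [St_eq_zero 0 (k+1) (by omega)]
      simp only [pow_zero, mul_one, Nat.cast_zero, mul_zero]
      have h1 : ∀ j ∈ range (k+2), (-1:ℤ)^(k+1-j) * ((k+1).choose j) =
          (fun i => (-1:ℤ)^i * ((k+1).choose i)) (k+1-j) := by
        intro j hj
        have hj' : j ≤ k+1 := Nat.lt_succ_iff.mp (mem_range.mp hj)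
        dsimp only
        rw [Nat.choose_symm hj']
      rw [Finset.sum_congr rfl h1]
      have h2 := Finset.sum_range_reflect (fun i => (-1:ℤ)^i * ((k+1).choose i)) (k+2)
      simp only [show k+2-1 = k+1 from rfl] at h2
      rw [show (∑ x ∈ range (k+2), (fun i => (-1:ℤ)^i * ((k+1).choose i)) (k+1-x))
          = ∑ x ∈ range (k+2), (-1:ℤ)^(k+1-x) * ((k+1).choose (k+1-x)) from rfl,
        h2, Int.alternating_sum_range_choose]
      simp
  | succ n ih =>
    intro m
    match m with
    | 0 => simp [St, Finset.sum_range_one]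
    | k+1 =>
      have hrec : St (n+1) (k+1) = (k+1) * St n (k+1) + St n k := rfl
      have key : ∀ j, j ≤ k + 1 → ((k+1:ℕ) : ℤ) * ((k.choose j) : ℤ)
          = ((k+1).choose j : ℤ) * ((k+1 : ℤ) - j) := by
        intro j hj
        have h1 : (k+1) * k.choose j = (k+1).choose (j+1) * (j+1) := Nat.add_one_mul_choose_eq k j
        have h2 : (k+1).choose (j+1) * (j+1) = (k+1).choose j * (k+1-j) :=
          Nat.choose_succ_right_eq (k+1) j
        have h3 : ((k+1-j : ℕ) : ℤ) = (k+1 : ℤ) - j := by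
          rw [Nat.cast_sub hj]; push_cast; ring
        rw [← h3]
        exact_mod_cast h1.trans h2
      have step1 : ∀ j ∈ range (k+2),
          (-1:ℤ)^(k+1-j) * ((k+1).choose j) * (j:ℤ)^(n+1) =
          (k+1) * ((-1:ℤ)^(k+1-j) * ((k+1).choose j) * (j:ℤ)^n)
            - (k+1) * ((-1:ℤ)^(k+1-j) * (k.choose j) * (j:ℤ)^n) := by
        intro j hj
        have hj' : j ≤ k+1 := Nat.lt_succ_iff.mp (mem_range.mp hj)
        have k' := key j hj'
        rw [pow_succ]
        push_cast at k' ⊢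
        linear_combination ((-1:ℤ)^(k+1-j) * (j:ℤ)^n) * k'
      rw [Finset.sum_congr rfl step1, Finset.sum_sub_distrib, ← Finset.mul_sum, ← Finset.mul_sum]
      have hS2 : ∑ j ∈ range (k+2), (-1:ℤ)^(k+1-j) * (k.choose j) * (j:ℤ)^n
          = - ∑ j ∈ range (k+1), (-1:ℤ)^(k-j) * (k.choose j) * (j:ℤ)^n := by
        rw [Finset.sum_range_succ, Nat.choose_eq_zero_of_lt (by omega)]
        have h3 : ∀ j ∈ range (k+1), (-1:ℤ)^(k+1-j) * (k.choose j) * (j:ℤ)^n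
            = - ((-1:ℤ)^(k-j) * (k.choose j) * (j:ℤ)^n) := by
          intro j hj
          have hj' : j ≤ k := Nat.lt_succ_iff.mp (mem_range.mp hj)
          rw [show k+1-j = (k-j)+1 by omega, pow_succ]
          ring
        rw [Finset.sum_congr rfl h3, Finset.sum_neg_distrib]
        push_cast
        ring
      rw [hS2, hrec]
      have e1 := ih (k+1)
      have e2 := ih k
      have hfact : ((k+1).factorial : ℤ) = (k+1) * (k.factorial : ℤ) := by
        rw [Nat.factorial_succ]; push_cast; ring
      push_cast at e1 e2 ⊢
      rw [hfact] at e1 ⊢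
      linear_combination ((k:ℤ)+1) * e1 + ((k:ℤ)+1) * e2

section modp
variable {p : ℕ} [hp : Fact p.Prime]

lemma fact_ne_zero {m : ℕ} (h : m < p) : (m.factorial : ZMod p) ≠ 0 := by
  rw [Ne, ZMod.natCast_eq_zero_iff]
  intro hd
  exact absurd ((Nat.Prime.dvd_factorial Fact.out).mp hd) (Nat.not_le.mpr h)

lemma St_p_eq {m : ℕ} (hm : m < p) : ((St p m : ℕ) : ZMod p) = ((St 1 m : ℕ) : ZMod p) := by
  have c1 := congrArg (fun z : ℤ => (z : ZMod p)) (St_formula p m)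
  have c2 := congrArg (fun z : ℤ => (z : ZMod p)) (St_formula 1 m)
  push_cast at c1 c2
  have hs : ∀ j ∈ range (m+1), (-1 : ZMod p)^(m-j) * (m.choose j) * (j : ZMod p)^p
      = (-1 : ZMod p)^(m-j) * (m.choose j) * (j : ZMod p)^1 := by
    intro j hj
    rw [ZMod.pow_card, pow_one]
  rw [Finset.sum_congr rfl hs] at c1
  exact mul_left_cancel₀ (fact_ne_zero hm) (c1.trans c2.symm)

lemma St_main : ∀ n m : ℕ, ((St (n+p) m : ℕ) : ZMod p) =
    ((St (n+1) m : ℕ) : ZMod p) + (if p ≤ m then ((St n (m-p) : ℕ) : ZMod p) else 0) := by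
  have hp2 : 2 ≤ p := hp.out.two_le
  intro n
  induction n with
  | zero =>
    intro m
    rcases lt_trichotomy m p with h | h | h
    · rw [if_neg (Nat.not_le.mpr h), add_zero, Nat.zero_add]
      exact St_p_eq h
    · subst h
      rw [if_pos le_rfl, Nat.sub_self, Nat.zero_add, St_eq_zero 1 m (by omega),
        show St 0 0 = 1 from rfl, St_diag m]
      simp
    · rw [if_pos (by omega), Nat.zero_add, St_eq_zero p m h, St_eq_zero 1 m (by omega),
        St_eq_zero 0 (m - p) (by omega)]
      simp
  | succ n ih =>
    intro m
    match m with
    | 0 =>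
      rw [if_neg (by omega), show n+1+p = (n+p)+1 by omega,
        show St ((n+p)+1) 0 = 0 from rfl, show St ((n+1)+1) 0 = 0 from rfl]
      simp
    | M+1 =>
      have hrec1 : St (n+1+p) (M+1) = (M+1) * St (n+p) (M+1) + St (n+p) M := by
        rw [show n+1+p = (n+p)+1 by omega]
        rfl
      have hrec2 : St (n+2) (M+1) = (M+1) * St (n+1) (M+1) + St (n+1) M := rfl
      rw [hrec1]
      push_cast
      rw [ih (M+1), ih M]
      rcases lt_trichotomy (M+1) p with h | h | h
      · rw [if_neg (by omega), if_neg (by omega), if_neg (by omega), show n+1+1 = n+2 by omega,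
          hrec2]
        push_cast
        ring
      · have hM1 : ((M+1 : ℕ) : ZMod p) = 0 := by
          rw [h]; exact ZMod.natCast_self p
        rw [if_pos (by omega), if_neg (by omega), if_pos (by omega), show n+1+1 = n+2 by omega,
          hrec2, show M+1-p = 0 by omega, show St (n+1) 0 = 0 from rfl]
        have hz : (M : ZMod p) + 1 = 0 := by exact_mod_cast hM1
        push_cast
        linear_combination ((St n 0 : ℕ) : ZMod p) * hz
      · have hMp : M + 1 - p = (M - p) + 1 := by omega
        have hM1 : ((M+1 : ℕ) : ZMod p) = (((M-p)+1 : ℕ) : ZMod p) := by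
          rw [show M+1 = ((M-p)+1)+p by omega]
          push_cast [ZMod.natCast_self]
          ring
        rw [if_pos (by omega), if_pos (by omega), if_pos (by omega), show n+1+1 = n+2 by omega,
          hrec2, hMp, show St (n+1) ((M-p)+1) = ((M-p)+1) * St n ((M-p)+1) + St n (M-p) from rfl]
        push_cast
        push_cast at hM1
        rw [hM1]
        ring
end modp


section glue
variable {α : Type*} [DecidableEq α]

lemma isPartSet_parts {s : Finset α} (P : Finpartition s) : IsPartSet s P.parts :=
  ⟨fun _ ht => P.le ht, P.bot_notMem, fun _ hx => P.existsUnique_mem hx⟩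

def IsPartSet.toFinpartition {s : Finset α} {C : Finset (Finset α)} (h : IsPartSet s C) :
    Finpartition s where
  parts := C
  supIndep := by
    rw [Finset.supIndep_iff_pairwiseDisjoint]
    intro t ht u hu htu
    rw [Function.onFun, Finset.disjoint_left]
    intro x hxt hxu
    exact htu (h.disj ht hu hxt hxu)
  sup_parts := by
    apply le_antisymm
    · exact Finset.sup_le fun t ht => h.1 t ht
    · intro x hx
      obtain ⟨t, ⟨htC, hxt⟩, -⟩ := h.2.2 x hx
      exact Finset.mem_sup.mpr ⟨t, htC, hxt⟩
  bot_notMem := h.2.1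

lemma stirling_eq_SP (n k : ℕ) :
    stirling n k = (SP (Finset.univ : Finset (Fin n)) k).card := by
  rw [stirling, ← Nat.card_eq_finsetCard]
  apply Nat.card_congr
  exact {
    toFun := fun P => ⟨P.1.parts, mem_SP.mpr ⟨isPartSet_parts P.1, P.2⟩⟩
    invFun := fun C => ⟨((mem_SP.mp C.2).1).toFinpartition, (mem_SP.mp C.2).2⟩
    left_inv := fun P => by
      ext1
      have : ∀ (P Q : Finpartition (Finset.univ : Finset (Fin n))), P.parts = Q.parts → P = Q := by
        intro P Q h; cases P; cases Q; simpa using h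
      exact this _ _ rfl
    right_inv := fun C => by ext1; rfl }

lemma SP_empty_zero : SP (∅ : Finset α) 0 = {∅} := by
  ext C
  rw [mem_SP, Finset.mem_singleton]
  constructor
  · rintro ⟨-, hc⟩
    exact Finset.card_eq_zero.mp hc
  · rintro rfl
    exact ⟨⟨fun t ht => absurd ht (Finset.notMem_empty t), Finset.notMem_empty _,
      fun x hx => absurd hx (Finset.notMem_empty x)⟩, rfl⟩

lemma SP_empty_succ (k : ℕ) : SP (∅ : Finset α) (k+1) = ∅ := by
  ext C
  rw [mem_SP]
  simp only [Finset.notMem_empty, iff_false]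
  rintro ⟨⟨hsub, hne, -⟩, hc⟩
  obtain ⟨t, ht⟩ := Finset.card_pos.mp (by omega : 0 < C.card)
  exact hne ((Finset.subset_empty.mp (hsub t ht)) ▸ ht)

lemma SP_zero_of_nonempty {s : Finset α} (hs : s.Nonempty) : SP s 0 = ∅ := by
  ext C
  rw [mem_SP]
  simp only [Finset.notMem_empty, iff_false]
  rintro ⟨⟨-, -, huniq⟩, hc⟩
  obtain ⟨x, hx⟩ := hs
  obtain ⟨t, ⟨htC, -⟩, -⟩ := huniq x hx
  rw [Finset.card_eq_zero.mp hc] at htC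
  exact Finset.notMem_empty t htC

lemma stirling_zero_zero : stirling 0 0 = 1 := by
  rw [stirling_eq_SP, Finset.univ_eq_empty, SP_empty_zero, Finset.card_singleton]

lemma stirling_zero_succ (k : ℕ) : stirling 0 (k+1) = 0 := by
  rw [stirling_eq_SP, Finset.univ_eq_empty, SP_empty_succ, Finset.card_empty]

lemma stirling_succ_zero (n : ℕ) : stirling (n+1) 0 = 0 := by
  rw [stirling_eq_SP, SP_zero_of_nonempty Finset.univ_nonempty, Finset.card_empty]

lemma stirling_rec (n k : ℕ) :
    stirling (n+1) (k+1) = (k+1) * stirling n (k+1) + stirling n k := by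
  have key : (Finset.univ : Finset (Fin (n+1)))
      = insert (Fin.last n) ((Finset.univ : Finset (Fin n)).image Fin.castSucc) := by
    ext x
    simp only [Finset.mem_univ, Finset.mem_insert, Finset.mem_image, true_iff]
    by_cases hx : x = Fin.last n
    · exact Or.inl hx
    · refine Or.inr ⟨⟨x.val, ?_⟩, trivial, ?_⟩
      · have := x.isLt
        have : x.val ≠ n := fun h => hx (Fin.ext h)
        omega
      · exact Fin.ext rfl
  have ha : Fin.last n ∉ (Finset.univ : Finset (Fin n)).image Fin.castSucc := by
    simp only [Finset.mem_image, not_exists]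
    rintro y ⟨-, hy⟩
    have := Fin.castSucc_lt_last y
    exact absurd hy (ne_of_lt this)
  rw [stirling_eq_SP, key, SP_insert_card ha k,
    SP_image_card (Fin.castSucc_injective n) _ (k+1), SP_image_card (Fin.castSucc_injective n) _ k,
    ← stirling_eq_SP, ← stirling_eq_SP]

lemma stirling_eq_St : ∀ n k, stirling n k = St n k := by
  intro n
  induction n with
  | zero =>
    intro k
    cases k with
    | zero => exact stirling_zero_zero
    | succ k => exact stirling_zero_succ k
  | succ n ih =>
    intro k
    cases k with
    | zero => exact stirling_succ_zero n
    | succ k =>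
      rw [stirling_rec, ih, ih]
      rfl
end glue

end StirlingAux


theorem stmt_14 (p i t : ℕ) (hp : p.Prime) (h1 : 1 ≤ t) (h2 : t ≤ i) (h3 : i ≤ p - 1) :
    stirling (i + p) (t + p) ≡ stirling (i + 1) (t + p) + stirling i t [MOD p] ∧
      stirling (i + p) (t + p) ≡ stirling i t [MOD p] := by
  haveI : Fact p.Prime := ⟨hp⟩
  have hp2 : 2 ≤ p := hp.two_le
  open StirlingAux in
  have main := StirlingAux.St_main (p := p) i (t + p)
  rw [if_pos (by omega : p ≤ t + p), show t + p - p = t by omega] at main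
  have h0 : St (i+1) (t+p) = 0 := StirlingAux.St_eq_zero _ _ (by omega)
  have key1 : ((St (i+p) (t+p) : ℕ) : ZMod p) = ((St (i+1) (t+p) + St i t : ℕ) : ZMod p) := by
    push_cast
    rw [main]
  have key2 : ((St (i+p) (t+p) : ℕ) : ZMod p) = ((St i t : ℕ) : ZMod p) := by
    rw [key1, h0]
    push_cast
    ring
  constructor
  · rw [StirlingAux.stirling_eq_St, StirlingAux.stirling_eq_St, StirlingAux.stirling_eq_St]
    exact (ZMod.natCast_eq_natCast_iff _ _ _).mp key1
  · rw [StirlingAux.stirling_eq_St, StirlingAux.stirling_eq_St]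
    exact (ZMod.natCast_eq_natCast_iff _ _ _).mp key2
end

section
/- Let p ≥ 3 be a prime and let i be an integer with 1 ≤ i ≤ p-1. Then ∑_{m=p+1}^{i+p} (-1)^{m-1} (m-1)! · S(i+p, m)_{≤ p-1} ≡ p (mod p^2) if i = 1, and ≡ 0 (mod p^2) if i ≥ 2. -/
open Finset Nat Function

theorem Nat.factorial_mul_stirlingSecond {R : Type*} [CommRing R] (n k : ℕ) :
    (k ! : R) * stirlingSecond n k =
      ∑ j ∈ range (k + 1), (-1) ^ (k + j) * (k.choose j : R) * (j : R) ^ n := by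
  induction n generalizing k with
  | zero =>
    have binom :
        ∑ j ∈ range (k + 1), (-1 : R) ^ (k + j) * (k.choose j : R) = (-1) ^ k * 0 ^ k := by
      rw [← neg_add_cancel (1 : R), add_pow, mul_sum]
      refine sum_congr rfl fun j _ => ?_
      rw [one_pow, mul_one, pow_add, mul_assoc]
    simp only [pow_zero, mul_one, binom]
    rcases k with _ | k <;> simp
  | succ n ih =>
    rcases k with _ | k
    · simp
    have pascal : ∀ j ∈ range (k + 2),
        (-1) ^ (k + 1 + j) * ((k + 1).choose j : R) * (j : R) ^ (n + 1) =
          (k + 1) * ((-1) ^ (k + 1 + j) * ((k + 1).choose j : R) * (j : R) ^ n +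
            (-1) ^ (k + j) * (k.choose j : R) * (j : R) ^ n) := by
      intro j hj
      have h := congrArg (Nat.cast : ℕ → R) (choose_mul_succ_eq k j)
      push_cast [Nat.cast_sub (mem_range_succ_iff.mp hj)] at h
      linear_combination -(-1) ^ (k + j) * (j : R) ^ n * h
    rw [sum_congr rfl pascal, ← mul_sum, sum_add_distrib, ← ih, sum_range_succ _ (k + 1),
      choose_succ_self, ← ih, stirlingSecond_succ_succ, factorial_succ]
    push_cast
    ring

theorem Nat.stirlingSecond_add_prime_of_lt {p : ℕ} [Fact p.Prime] {m : ℕ} (hm : m < p) (n : ℕ) :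
    (stirlingSecond (n + p) m : ZMod p) = stirlingSecond (n + 1) m := by
  have hfac : (m ! : ZMod p) ≠ 0 := by
    rw [Ne, ZMod.natCast_eq_zero_iff, (Fact.out : p.Prime).dvd_factorial]
    omega
  refine mul_left_cancel₀ hfac ?_
  rw [factorial_mul_stirlingSecond, factorial_mul_stirlingSecond]
  refine sum_congr rfl fun j _ => ?_
  rw [pow_add (j : ZMod p), ZMod.pow_card, ← pow_succ]

theorem Nat.stirlingSecond_add_prime_add_prime {p : ℕ} [hp : Fact p.Prime] (n j : ℕ) :
    (stirlingSecond (n + p) (j + p) : ZMod p) =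
      stirlingSecond (n + 1) (j + p) + stirlingSecond n j := by
  have two_le := hp.out.two_le
  induction n generalizing j with
  | zero =>
    rcases j with _ | j
    · simp [stirlingSecond_self, stirlingSecond_eq_zero_of_lt (show 1 < p by omega)]
    · simp [stirlingSecond_eq_zero_of_lt (show p < j + 1 + p by omega),
        stirlingSecond_eq_zero_of_lt (show 1 < j + 1 + p by omega)]
  | succ n ih =>
    obtain ⟨q, rfl⟩ : ∃ q, p = q + 1 := ⟨p - 1, by omega⟩
    have hp0 : ((q + 1 : ℕ) : ZMod (q + 1)) = 0 := ZMod.natCast_self _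
    push_cast at hp0
    rcases j with _ | j
    · rw [zero_add, show n + 1 + (q + 1) = n + (q + 1) + 1 by ring,
        stirlingSecond_succ_succ, stirlingSecond_succ_succ (n + 1)]
      push_cast
      rw [stirlingSecond_add_prime_of_lt (show q < q + 1 by omega) n, hp0]
      simp
    · rw [show n + 1 + (q + 1) = n + (q + 1) + 1 by ring,
        show j + 1 + (q + 1) = j + (q + 1) + 1 by ring, stirlingSecond_succ_succ,
        stirlingSecond_succ_succ (n + 1), stirlingSecond_succ_succ n j]
      push_cast
      rw [show j + (q + 1) + 1 = (j + 1) + (q + 1) by ring, ih (j + 1), ih j]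
      linear_combination (stirlingSecond n (j + 1) : ZMod (q + 1)) * hp0

theorem Nat.sum_range_neg_one_pow_mul_factorial_mul_stirlingSecond (n : ℕ) :
    ∑ r ∈ range n, (-1 : ℤ) ^ r * r ! * stirlingSecond n (r + 1) = if n = 1 then 1 else 0 := by
  rcases n with _ | n
  · simp
  set a : ℕ → ℤ := fun r => (-1) ^ r * r ! * stirlingSecond n r
  have telescope : ∀ r ∈ range (n + 1),
      (-1 : ℤ) ^ r * r ! * stirlingSecond (n + 1) (r + 1) = a r - a (r + 1) := by
    intro r _
    simp only [a, stirlingSecond_succ_succ, factorial_succ]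
    push_cast
    ring
  rw [sum_congr rfl telescope, sum_range_sub']
  rcases n with _ | n <;> simp [a, stirlingSecond_eq_zero_of_lt]

theorem Nat.cast_succ_ascFactorial_of_cast_eq_zero {S : Type*} [CommSemiring S] {n : ℕ}
    (hn : (n : S) = 0) (r : ℕ) :
    ((n + 1).ascFactorial r : S) = r ! := by
  rw [cast_ascFactorial]
  push_cast
  rw [hn, zero_add, ascPochhammer_eval_one]

section
variable {α β : Type*} [Fintype α] [Fintype β]

theorem card_surjective_eq_alternating_sum :
    (Nat.card {f : α → β // Surjective f} : ℤ) =
      ∑ j ∈ range (Fintype.card β + 1),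
        (-1) ^ (Fintype.card β + j) * ((Fintype.card β).choose j : ℤ) *
          (j : ℤ) ^ Fintype.card α := by
  classical
  set k := Fintype.card β
  set n := Fintype.card α
  let avoiding : β → Finset (α → β) := fun y => {f | ∀ x, f x ≠ y}
  have surj : ({f | Surjective f} : Finset (α → β)) = univ.inf fun y => (avoiding y)ᶜ := by
    ext f
    rw [mem_filter, mem_inf]
    simp [avoiding, Surjective]
  have card_avoiding (t : Finset β) : #(t.inf avoiding) = (k - #t) ^ n := by
    have : t.inf avoiding = Fintype.piFinset fun _ => tᶜ := by
      ext f
      simp only [avoiding, mem_inf, mem_filter, mem_univ, true_and, Fintype.mem_piFinset, mem_compl]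
      exact ⟨fun h x hx => h _ hx x rfl, fun h y hy x hxy => h x (hxy ▸ hy)⟩
    rw [this, Fintype.card_piFinset, prod_const, card_compl, Finset.card_univ]
  rw [Nat.card_eq_fintype_card, Fintype.card_subtype, surj, inclusion_exclusion_card_inf_compl]
  simp only [card_avoiding]
  push_cast
  rw [sum_powerset_apply_card (fun m => (-1 : ℤ) ^ m * ((k - m : ℕ) : ℤ) ^ n), Finset.card_univ,
    ← sum_range_reflect]
  refine sum_congr rfl fun j hj => ?_
  have hj : j ≤ k := mem_range_succ_iff.mp hj
  rw [add_tsub_cancel_right, nsmul_eq_mul, choose_symm hj, Nat.sub_sub_self hj,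
    show Fintype.card β - j = k - j from rfl, show k + j = (k - j) + 2 * j by omega, pow_add,
    pow_mul, neg_one_sq, one_pow, mul_one]
  ring

theorem card_surjective_eq_factorial_mul_stirlingSecond :
    Nat.card {f : α → β // Surjective f} =
      (Fintype.card β)! * stirlingSecond (Fintype.card α) (Fintype.card β) := by
  exact_mod_cast card_surjective_eq_alternating_sum.trans (factorial_mul_stirlingSecond _ _).symm

end

theorem Function.Surjective.exists_equiv_comp_eq {α Q B : Type*} {q : α → Q} {f : α → B}
    (hq : Surjective q) (hf : Surjective f) (h : ∀ x y, q x = q y ↔ f x = f y) :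
    ∃ e : Q ≃ B, e ∘ q = f := by
  have hcomp : ∀ x, f (surjInv hq (q x)) = f x := fun x =>
    (h _ _).mp (surjInv_eq hq (q x))
  refine ⟨Equiv.ofBijective (f ∘ surjInv hq) ⟨fun t t' htt' => ?_, fun b => ?_⟩, funext hcomp⟩
  · rw [← surjInv_eq hq t, ← surjInv_eq hq t']
    exact (h _ _).mpr htt'
  · obtain ⟨x, rfl⟩ := hf b
    exact ⟨q x, hcomp x⟩

namespace Finpartition

variable {α : Type*} [Fintype α] [DecidableEq α]

def partSubtype (P : Finpartition (univ : Finset α)) (x : α) : P.parts :=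
  ⟨P.part x, P.part_mem.2 (mem_univ x)⟩

theorem partSubtype_surjective (P : Finpartition (univ : Finset α)) :
    Surjective P.partSubtype := by
  rintro ⟨t, ht⟩
  obtain ⟨x, hx⟩ := P.nonempty_of_mem_parts ht
  exact ⟨x, Subtype.ext (P.part_eq_of_mem ht hx)⟩

theorem partSubtype_eq_iff (P : Finpartition (univ : Finset α)) {x y : α} :
    P.partSubtype x = P.partSubtype y ↔ P.part x = P.part y :=
  Subtype.ext_iff

theorem ext_part {P Q : Finpartition (univ : Finset α)}
    (h : ∀ x y, P.part x = P.part y ↔ Q.part x = Q.part y) : P = Q := by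
  have hpart : ∀ x, P.part x = Q.part x := fun x => by
    ext y
    rw [P.mem_part_iff_part_eq_part (mem_univ y) (mem_univ x),
      Q.mem_part_iff_part_eq_part (mem_univ y) (mem_univ x), h]
  have parts_eq (R : Finpartition (univ : Finset α)) : R.parts = univ.image R.part := by
    ext t
    constructor
    · intro ht
      obtain ⟨x, hx⟩ := R.partSubtype_surjective ⟨t, ht⟩
      exact mem_image.mpr ⟨x, mem_univ x, congrArg Subtype.val hx⟩
    · intro ht
      obtain ⟨x, -, rfl⟩ := mem_image.mp ht
      exact (R.partSubtype x).2
  exact Finpartition.ext (by rw [parts_eq, parts_eq, image_congr fun x _ => hpart x])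

theorem card_surjective_fin_eq_factorial_mul_card (k : ℕ) :
    Nat.card {f : α → Fin k // Surjective f} =
      k ! * Nat.card {P : Finpartition (univ : Finset α) // #P.parts = k} := by
  let label : (Σ P : {P : Finpartition (univ : Finset α) // #P.parts = k}, P.1.parts ≃ Fin k) →
      {f : α → Fin k // Surjective f} :=
    fun P => ⟨P.2 ∘ P.1.1.partSubtype, P.2.surjective.comp P.1.1.partSubtype_surjective⟩
  have label_injective : Injective label := by
    rintro ⟨⟨P, hP⟩, e⟩ ⟨⟨Q, hQ⟩, e'⟩ hPQ
    have hfun : ∀ x, e (P.partSubtype x) = e' (Q.partSubtype x) :=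
      fun x => congrFun (congrArg Subtype.val hPQ) x
    obtain rfl : P = Q := ext_part fun x y => by
      rw [← partSubtype_eq_iff, ← partSubtype_eq_iff, ← e.injective.eq_iff, ← e'.injective.eq_iff,
        hfun, hfun]
    obtain rfl : e = e' := Equiv.ext fun t => by
      obtain ⟨x, rfl⟩ := P.partSubtype_surjective t
      exact hfun x
    rfl
  have label_surjective : Surjective label := by
    rintro ⟨f, hf⟩
    classical
    let P := Finpartition.ofSetoid (Setoid.ker f)
    have hP : ∀ x y, P.partSubtype x = P.partSubtype y ↔ f x = f y := fun x y => by
      rw [partSubtype_eq_iff, ← P.mem_part_iff_part_eq_part (mem_univ x) (mem_univ y),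
        mem_part_ofSetoid_iff_rel, Setoid.ker_def, eq_comm]
    obtain ⟨e, he⟩ := P.partSubtype_surjective.exists_equiv_comp_eq hf hP
    have hcard : #P.parts = k := by simpa using Fintype.card_congr e
    exact ⟨⟨⟨P, hcard⟩, e⟩, Subtype.ext he⟩
  rw [← Nat.card_eq_of_bijective label ⟨label_injective, label_surjective⟩, Nat.card_sigma,
    sum_congr rfl fun P _ => ?_, sum_const, smul_eq_mul, mul_comm, Finset.card_univ,
    Nat.card_eq_fintype_card]
  rw [Nat.card_eq_fintype_card, Fintype.card_equiv (Fintype.equivFinOfCardEq (by simp [P.2])),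
    Fintype.card_coe, P.2]

end Finpartition

theorem Finpartition.card_add_card_parts_le {α : Type*} [DecidableEq α] {s b : Finset α}
    (P : Finpartition s) (hb : b ∈ P.parts) : #b + #P.parts ≤ #s + 1 := by
  have hsum := P.sum_card_parts
  rw [← sum_erase_add _ _ hb] at hsum
  have hrest : #(P.parts.erase b) ≤ ∑ c ∈ P.parts.erase b, #c := by
    simpa using card_nsmul_le_sum (P.parts.erase b) card 1 fun c hc =>
      (P.nonempty_of_mem_parts (mem_of_mem_erase hc)).card_pos
  have := card_erase_add_one hb
  omega

theorem card_finpartition_eq_stirlingSecond {α : Type*} [Fintype α] [DecidableEq α] (k : ℕ) :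
    Nat.card {P : Finpartition (univ : Finset α) // #P.parts = k} =
      stirlingSecond (Fintype.card α) k := by
  have h := card_surjective_eq_factorial_mul_stirlingSecond (α := α) (β := Fin k)
  rw [Finpartition.card_surjective_fin_eq_factorial_mul_card, Fintype.card_fin] at h
  exact Nat.eq_of_mul_eq_mul_left (factorial_pos k) h

theorem stirlingRes_eq_stirlingSecond {n k r : ℕ} (h : n + 1 ≤ k + r) :
    stirlingRes n k r = stirlingSecond n k := by
  rw [stirlingRes, ← Fintype.card_fin n, ← card_finpartition_eq_stirlingSecond, Fintype.card_fin]
  refine Nat.card_congr (Equiv.subtypeEquivRight fun P => and_iff_left_of_imp fun hP b hb => ?_)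
  have := P.card_add_card_parts_le hb
  rw [hP, Finset.card_univ, Fintype.card_fin] at this
  omega

theorem stmt_15_general (p i : ℕ) (hp : p.Prime) (h2 : i ≤ p - 1) :
    ∑ m ∈ Finset.Icc (p + 1) (i + p),
        (-1 : ℤ) ^ (m - 1) * (Nat.factorial (m - 1) : ℤ) * stirlingRes (i + p) m (p - 1) ≡
      (if i = 1 then (p : ℤ) else 0) [ZMOD (p : ℤ) ^ 2] := by
  have : Fact p.Prime := ⟨hp⟩
  have two_le := hp.two_le
  set X : ℕ → ℤ := fun r =>
    (-1) ^ (p + r) * ((p - 1)! * (p + 1).ascFactorial r : ℕ) * stirlingSecond (i + p) (r + 1 + p)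
  have sum_eq : ∑ m ∈ Icc (p + 1) (i + p),
      (-1 : ℤ) ^ (m - 1) * ((m - 1)! : ℤ) * stirlingRes (i + p) m (p - 1) =
        p * ∑ r ∈ range i, X r := by
    rw [← Ico_add_one_right_eq_Icc, sum_Ico_eq_sum_range, mul_sum,
      show i + p + 1 - (p + 1) = i by omega]
    refine sum_congr rfl fun r hr => ?_
    have hr := mem_range.mp hr
    rw [stirlingRes_eq_stirlingSecond (k := p + 1 + r) (by omega),
      show p + 1 + r - 1 = p + r by omega, show p + 1 + r = r + 1 + p by omega,
      ← factorial_mul_ascFactorial, ← mul_factorial_pred hp.ne_zero]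
    simp only [X]
    push_cast
    ring
  have sum_X_mod : ∑ r ∈ range i, X r ≡ (if i = 1 then 1 else 0) [ZMOD p] := by
    rw [← ZMod.intCast_eq_intCast_iff, ← sum_range_neg_one_pow_mul_factorial_mul_stirlingSecond]
    push_cast
    refine sum_congr rfl fun r hr => ?_
    have hr := mem_range.mp hr
    simp only [X]
    push_cast
    rw [stirlingSecond_add_prime_add_prime,
      stirlingSecond_eq_zero_of_lt (show i + 1 < r + 1 + p by omega),
      cast_succ_ascFactorial_of_cast_eq_zero (ZMod.natCast_self p), pow_add, ZMod.pow_card,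
      ZMod.wilsons_lemma]
    ring
  rw [sum_eq, sq]
  convert sum_X_mod.mul_left' (c := (p : ℤ)) using 2
  split_ifs <;> simp

theorem stmt_15 (p i : ℕ) (hp : p.Prime) (hp3 : 3 ≤ p) (h1 : 1 ≤ i) (h2 : i ≤ p - 1) :
    ∑ m ∈ Finset.Icc (p + 1) (i + p),
        (-1 : ℤ) ^ (m - 1) * (Nat.factorial (m - 1) : ℤ) * stirlingRes (i + p) m (p - 1) ≡
      (if i = 1 then (p : ℤ) else 0) [ZMOD (p : ℤ) ^ 2] :=
  stmt_15_general p i hp h2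
end

section
/- Let p ≥ 3 be a prime and let i be an integer with 1 ≤ i ≤ p-1. Then ∑_{m=1}^{i+p} (-1)^{m-1} (m-1)! · S(i+p, m)_{≤ p-1} ≡ (-1)^{i+1} · p / i (mod p^2), i.e., i · ∑_{m=1}^{i+p} (-1)^{m-1}(m-1)! S(i+p,m)_{≤p-1} ≡ (-1)^{i+1} p (mod p^2). -/
open Finset
open scoped Nat

namespace Finset

theorem sum_range_ite_lt {M : Type*} [AddCommMonoid M] {N r : ℕ} {f : ℕ → M}
    (hf : ∀ j, N ≤ j → f j = 0) :
    ∑ j ∈ range N, (if j < r then f j else 0) = ∑ j ∈ range r, f j := by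
  rw [← sum_filter]
  refine sum_subset (fun j hj => by simp_all) fun j hj hjN => hf j ?_
  simp_all

theorem sum_powerset_filter_mem_apply_card {α M : Type*} [DecidableEq α] [AddCommMonoid M]
    (f : ℕ → M) {s : Finset α} {a : α} (ha : a ∈ s) :
    ∑ B ∈ s.powerset with a ∈ B, f #B = ∑ j ∈ range #s, (#s - 1).choose j • f (j + 1) := by
  have ha' : a ∉ s.erase a := notMem_erase a s
  rw [← insert_erase ha, sum_filter, sum_powerset_insert ha', insert_erase ha,
    ← card_erase_add_one ha, Nat.add_sub_cancel, ← sum_powerset_apply_card,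
    sum_eq_zero fun t ht => if_neg fun hat => ha' (mem_powerset.1 ht hat), zero_add]
  refine sum_congr rfl fun t ht => ?_
  rw [if_pos (mem_insert_self a t), card_insert_of_notMem fun hat => ha' (mem_powerset.1 ht hat)]

end Finset

namespace Finpartition

variable {α : Type*} [DecidableEq α] {s B : Finset α}

theorem parts_avoid_of_mem_s16 (P : Finpartition s) (hB : B ∈ P.parts) :
    (P.avoid B).parts = P.parts.erase B := by
  ext c
  rw [mem_avoid, mem_erase]
  constructor
  · rintro ⟨d, hd, hdB, rfl⟩
    have hdisj : Disjoint d B := P.disjoint hd hB (by rintro rfl; exact hdB le_rfl)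
    rw [hdisj.sdiff_eq_left]
    exact ⟨by rintro rfl; exact hdB le_rfl, hd⟩
  · rintro ⟨hcB, hc⟩
    have hdisj : Disjoint c B := P.disjoint hc hB hcB
    exact ⟨c, hc, fun h => P.ne_bot hc (hdisj.eq_bot_of_le h), hdisj.sdiff_eq_left⟩

theorem notMem_parts_of_sdiff (P : Finpartition (s \ B)) (hB : B.Nonempty) : B ∉ P.parts :=
  fun h => by
    obtain ⟨x, hx⟩ := hB
    exact (mem_sdiff.1 (P.le h hx)).2 hx

end Finpartition

section RestrictedPartitions

variable {α : Type*} [DecidableEq α]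

def restrictedPartitions (s : Finset α) (k r : ℕ) : Finset (Finpartition s) :=
  {P | #P.parts = k ∧ ∀ b ∈ P.parts, #b ≤ r}

theorem mem_restrictedPartitions {s : Finset α} {k r : ℕ} {P : Finpartition s} :
    P ∈ restrictedPartitions s k r ↔ #P.parts = k ∧ ∀ b ∈ P.parts, #b ≤ r := by
  simp [restrictedPartitions]

theorem card_restrictedPartitions_zero_right (s : Finset α) (r : ℕ) :
    #(restrictedPartitions s 0 r) = if s = ∅ then 1 else 0 := by
  split_ifs with hs
  · subst hs
    have hP : ∀ P : Finpartition (∅ : Finset α), P.parts = ∅ := fun P =>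
      Finpartition.parts_eq_empty_iff.2 rfl
    refine card_eq_one.2 ⟨Finpartition.empty _, eq_singleton_iff_unique_mem.2 ⟨?_, fun P _ =>
      Finpartition.ext (by rw [hP, hP])⟩⟩
    simp [mem_restrictedPartitions, hP]
  · refine card_eq_zero.2 (filter_eq_empty_iff.2 fun P _ h => hs ?_)
    exact Finpartition.parts_eq_empty_iff.1 (card_eq_zero.1 h.1)

theorem restrictedPartitions_eq_empty_of_card_lt {s : Finset α} {k r : ℕ} (h : #s < k) :
    restrictedPartitions s k r = ∅ :=
  filter_eq_empty_iff.2 fun P _ hP => (P.card_parts_le_card.trans_lt h).ne hP.1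

theorem card_filter_mem_parts_restrictedPartitions {s B : Finset α} (hBs : B ⊆ s)
    (hB : B.Nonempty) {k r : ℕ} (hBr : #B ≤ r) :
    #{P ∈ restrictedPartitions s (k + 1) r | B ∈ P.parts} =
      #(restrictedPartitions (s \ B) k r) := by
  have hc : s \ B ⊔ B = s := sdiff_union_of_subset hBs
  refine card_bij' (fun P _ => P.avoid B) (fun Q _ => Q.extend hB.ne_empty sdiff_disjoint hc)
    ?_ ?_ ?_ ?_
  · intro P hP
    simp only [mem_filter, mem_restrictedPartitions] at hP ⊢
    obtain ⟨⟨hcard, hsize⟩, hBP⟩ := hP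
    rw [P.parts_avoid_of_mem_s16 hBP, card_erase_of_mem hBP, hcard]
    exact ⟨rfl, fun b hb => hsize b (mem_of_mem_erase hb)⟩
  · intro Q hQ
    simp only [mem_filter, mem_restrictedPartitions, Finpartition.extend_parts] at hQ ⊢
    refine ⟨⟨by rw [card_insert_of_notMem (Q.notMem_parts_of_sdiff hB), hQ.1], ?_⟩,
      mem_insert_self _ _⟩
    rintro b hb
    rcases mem_insert.1 hb with rfl | hb
    exacts [hBr, hQ.2 b hb]
  · intro P hP
    ext1
    rw [Finpartition.extend_parts, P.parts_avoid_of_mem_s16 (mem_filter.1 hP).2,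
      insert_erase (mem_filter.1 hP).2]
  · intro Q _
    ext1
    rw [Finpartition.parts_avoid_of_mem_s16 _ (by simp), Finpartition.extend_parts,
      erase_insert (Q.notMem_parts_of_sdiff hB)]

theorem card_restrictedPartitions_succ_of_mem {s : Finset α} {a : α} (ha : a ∈ s) (k r : ℕ) :
    #(restrictedPartitions s (k + 1) r) =
      ∑ B ∈ s.powerset with a ∈ B ∧ #B ≤ r, #(restrictedPartitions (s \ B) k r) := by
  rw [card_eq_sum_card_fiberwise (f := fun P => P.part a)]
  · refine sum_congr rfl fun B hB => ?_
    obtain ⟨hBs, haB, hBr⟩ := by simpa only [mem_filter, mem_powerset] using hB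
    rw [← card_filter_mem_parts_restrictedPartitions hBs ⟨a, haB⟩ hBr]
    congr 1
    exact filter_congr fun P _ => ⟨fun h => h ▸ P.part_mem.2 ha, fun h => P.part_eq_of_mem h haB⟩
  · intro P hP
    simp only [mem_coe, mem_filter, mem_powerset, mem_restrictedPartitions] at hP ⊢
    exact ⟨P.part_subset a, P.mem_part_self.2 ha, hP.2 _ (P.part_mem.2 ha)⟩

theorem succ_mul_card_restrictedPartitions_succ (s : Finset α) (k r : ℕ) :
    (k + 1) * #(restrictedPartitions s (k + 1) r) =
      ∑ B ∈ s.powerset with B.Nonempty ∧ #B ≤ r, #(restrictedPartitions (s \ B) k r) := by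
  have hcount := sum_card_bipartiteAbove_eq_sum_card_bipartiteBelow
    (s := restrictedPartitions s (k + 1) r) (t := {B ∈ s.powerset | B.Nonempty ∧ #B ≤ r})
    (r := fun P B => B ∈ P.parts)
  rw [mul_comm, ← smul_eq_mul, ← sum_const]
  convert hcount using 2 with P hP B hB
  · obtain ⟨hcard, hsize⟩ := mem_restrictedPartitions.1 hP
    rw [bipartiteAbove, filter_mem_eq_inter, inter_eq_right.2, hcard]
    intro B hB
    simp only [mem_filter, mem_powerset]
    exact ⟨P.le hB, P.nonempty_of_mem_parts hB, hsize B hB⟩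
  · obtain ⟨hBs, hB, hBr⟩ := by simpa only [mem_filter, mem_powerset] using hB
    exact (card_filter_mem_parts_restrictedPartitions hBs hB hBr).symm

theorem stirlingRes_eq_card_restrictedPartitions (n k r : ℕ) :
    stirlingRes n k r = #(restrictedPartitions (univ : Finset (Fin n)) k r) := by
  rw [stirlingRes, Nat.card_eq_fintype_card, Fintype.card_subtype, restrictedPartitions]
  convert rfl

theorem card_restrictedPartitions_succ_eq_sum_choose {s : Finset α} {a : α} (ha : a ∈ s)
    {k r : ℕ} (h : ∀ B ⊆ s, #(restrictedPartitions (s \ B) k r) = stirlingRes (#s - #B) k r) :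
    #(restrictedPartitions s (k + 1) r) =
      ∑ j ∈ range r, (#s - 1).choose j * stirlingRes (#s - 1 - j) k r := by
  have hs : 0 < #s := card_pos.2 ⟨a, ha⟩
  calc #(restrictedPartitions s (k + 1) r)
      = ∑ B ∈ s.powerset with a ∈ B, if #B ≤ r then stirlingRes (#s - #B) k r else 0 := by
        rw [card_restrictedPartitions_succ_of_mem ha, ← filter_filter, sum_filter]
        exact sum_congr rfl fun B hB => by rw [h B (mem_powerset.1 (mem_filter.1 hB).1)]
    _ = ∑ j ∈ range #s, (#s - 1).choose j •
          if j + 1 ≤ r then stirlingRes (#s - (j + 1)) k r else 0 :=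
        sum_powerset_filter_mem_apply_card
          (fun m => if m ≤ r then stirlingRes (#s - m) k r else 0) ha
    _ = ∑ j ∈ range #s, if j < r then (#s - 1).choose j * stirlingRes (#s - 1 - j) k r else 0 :=
        sum_congr rfl fun j _ => by
          rw [show #s - (j + 1) = #s - 1 - j by omega]
          simp only [smul_eq_mul, mul_ite, mul_zero, Nat.add_one_le_iff]
    _ = _ := sum_range_ite_lt fun j hj => by rw [Nat.choose_eq_zero_of_lt (by omega), zero_mul]

-- `α` lives in `Type` so that the induction hypothesis covers both `s` and
-- `univ : Finset (Fin #s)`.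
theorem card_restrictedPartitions {α : Type} [DecidableEq α] (s : Finset α) (k r : ℕ) :
    #(restrictedPartitions s k r) = stirlingRes #s k r := by
  induction k generalizing α s with
  | zero =>
    rw [stirlingRes_eq_card_restrictedPartitions, card_restrictedPartitions_zero_right,
      card_restrictedPartitions_zero_right]
    simp only [← card_eq_zero, card_univ, Fintype.card_fin]
  | succ k ih =>
    rcases s.eq_empty_or_nonempty with rfl | ⟨a, ha⟩
    · rw [card_empty, stirlingRes_eq_card_restrictedPartitions,
        restrictedPartitions_eq_empty_of_card_lt (by simp),
        restrictedPartitions_eq_empty_of_card_lt (by simp), card_empty, card_empty]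
    have hsdiff : ∀ {β : Type} [DecidableEq β] (t : Finset β), ∀ B ⊆ t,
        #(restrictedPartitions (t \ B) k r) = stirlingRes (#t - #B) k r := fun t B hB => by
      rw [ih, card_sdiff_of_subset hB]
    have hs : 0 < #s := card_pos.2 ⟨a, ha⟩
    rw [stirlingRes_eq_card_restrictedPartitions, card_restrictedPartitions_succ_eq_sum_choose ha
      (hsdiff s), card_restrictedPartitions_succ_eq_sum_choose (mem_univ (⟨0, hs⟩ : Fin #s))
      (hsdiff _), card_univ, Fintype.card_fin]

end RestrictedPartitions

theorem stirlingRes_eq_zero_of_lt {n k : ℕ} (r : ℕ) (h : n < k) : stirlingRes n k r = 0 := by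
  rw [stirlingRes_eq_card_restrictedPartitions,
    restrictedPartitions_eq_empty_of_card_lt (by simpa using h), card_empty]

theorem stirlingRes_zero_right (n r : ℕ) : stirlingRes n 0 r = if n = 0 then 1 else 0 := by
  rw [stirlingRes_eq_card_restrictedPartitions, card_restrictedPartitions_zero_right]
  simp only [← card_eq_zero, card_univ, Fintype.card_fin]

theorem stirlingRes_succ_succ (n k r : ℕ) :
    stirlingRes (n + 1) (k + 1) r = ∑ j ∈ range r, n.choose j * stirlingRes (n - j) k r := by
  rw [stirlingRes_eq_card_restrictedPartitions, card_restrictedPartitions_succ_eq_sum_choose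
    (mem_univ 0) fun B hB => by rw [card_restrictedPartitions, card_sdiff_of_subset hB],
    card_univ, Fintype.card_fin, Nat.add_sub_cancel]

theorem succ_mul_stirlingRes_succ (n k r : ℕ) :
    (k + 1) * stirlingRes n (k + 1) r =
      ∑ j ∈ range r, n.choose (j + 1) * stirlingRes (n - (j + 1)) k r := by
  rw [stirlingRes_eq_card_restrictedPartitions, succ_mul_card_restrictedPartitions_succ]
  calc ∑ B ∈ (univ : Finset (Fin n)).powerset with B.Nonempty ∧ #B ≤ r,
        #(restrictedPartitions (univ \ B) k r)
      = ∑ B ∈ (univ : Finset (Fin n)).powerset,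
          if 0 < #B ∧ #B ≤ r then stirlingRes (n - #B) k r else 0 := by
        rw [sum_filter]
        refine sum_congr rfl fun B _ => ?_
        simp only [card_pos, card_restrictedPartitions, card_sdiff_of_subset (subset_univ B),
          card_univ, Fintype.card_fin]
    _ = ∑ m ∈ range (n + 1), n.choose m •
          if 0 < m ∧ m ≤ r then stirlingRes (n - m) k r else 0 := by
        rw [sum_powerset_apply_card
          (fun m => if 0 < m ∧ m ≤ r then stirlingRes (n - m) k r else 0), card_univ,
          Fintype.card_fin]
    _ = ∑ j ∈ range n, if j < r then n.choose (j + 1) * stirlingRes (n - (j + 1)) k r else 0 := by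
        rw [sum_range_succ']
        simp
    _ = _ := sum_range_ite_lt fun j hj => by rw [Nat.choose_eq_zero_of_lt (by omega), zero_mul]

noncomputable def altFubini (r n : ℕ) : ℤ :=
  ∑ m ∈ range (n + 1), (-1) ^ m * (m ! : ℤ) * stirlingRes n m r

theorem altFubini_eq_sum_range {r n N : ℕ} (h : n < N) :
    altFubini r n = ∑ m ∈ range N, (-1) ^ m * (m ! : ℤ) * stirlingRes n m r :=
  sum_subset (range_subset_range.2 h) fun m _ hm => by
    rw [stirlingRes_eq_zero_of_lt r (by simpa using hm), Nat.cast_zero, mul_zero]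

theorem altFubini_eq_neg_sum {r n : ℕ} (hn : 0 < n) :
    altFubini r n = -∑ m ∈ range (n + 1), (-1) ^ m * (m ! : ℤ) *
      ((m + 1) * stirlingRes n (m + 1) r : ℕ) := by
  rw [altFubini_eq_sum_range (N := n + 1 + 1) (by omega),
    sum_range_succ' (fun m => (-1) ^ m * (m ! : ℤ) * stirlingRes n m r), stirlingRes_zero_right,
    if_neg hn.ne', Nat.cast_zero, mul_zero, add_zero, ← sum_neg_distrib]
  refine sum_congr rfl fun m _ => ?_
  push_cast [Nat.factorial_succ]
  ring

theorem sum_range_choose_mul_altFubini (r : ℕ) {n : ℕ} (hn : 0 < n) :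
    ∑ j ∈ range (r + 1), (n.choose j : ℤ) * altFubini r (n - j) = 0 := by
  rw [sum_range_succ', Nat.choose_zero_right, Nat.sub_zero, Nat.cast_one, one_mul,
    altFubini_eq_neg_sum hn, add_neg_eq_zero]
  calc ∑ j ∈ range r, (n.choose (j + 1) : ℤ) * altFubini r (n - (j + 1))
      = ∑ j ∈ range r, ∑ m ∈ range (n + 1),
          (-1) ^ m * (m ! : ℤ) * (n.choose (j + 1) * stirlingRes (n - (j + 1)) m r : ℕ) :=
        sum_congr rfl fun j _ => by
          rw [altFubini_eq_sum_range (N := n + 1) (by omega), mul_sum]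
          refine sum_congr rfl fun m _ => ?_
          push_cast
          ring
    _ = _ := by
        rw [sum_comm]
        simp_rw [← mul_sum, ← Nat.cast_sum, ← succ_mul_stirlingRes_succ]

theorem altFubini_of_le {r n : ℕ} (h : n ≤ r) : altFubini r n = (-1) ^ n := by
  induction n using Nat.strong_induction_on with
  | _ n ih =>
  rcases n.eq_zero_or_pos with rfl | hn
  · simp [altFubini, stirlingRes_zero_right]
  have hrec := sum_range_choose_mul_altFubini r hn
  rw [← sum_subset (range_subset_range.2 (by omega : n + 1 ≤ r + 1)) fun j _ hj => by
    rw [Nat.choose_eq_zero_of_lt (by simpa using hj), Nat.cast_zero, zero_mul]] at hrec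
  have hbinom : ∑ j ∈ range (n + 1), (n.choose j : ℤ) * (-1) ^ (n - j) = 0 := by
    rw [← zero_pow hn.ne', ← add_neg_cancel (1 : ℤ), add_pow]
    exact sum_congr rfl fun j _ => by ring
  rw [sum_range_succ'] at hrec hbinom
  rw [sum_congr rfl fun j hj => by rw [ih (n - (j + 1)) (by omega) (by omega)]] at hrec
  simpa using hrec.trans hbinom.symm

theorem sum_Icc_stirlingRes_eq_sum_choose_mul_altFubini (n r : ℕ) :
    ∑ m ∈ Icc 1 (n + 1), (-1 : ℤ) ^ (m - 1) * ((m - 1)! : ℤ) * stirlingRes (n + 1) m r =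
      ∑ j ∈ range r, (n.choose j : ℤ) * altFubini r (n - j) := by
  rw [← Ico_add_one_right_eq_Icc, sum_Ico_eq_sum_range, Nat.add_sub_cancel]
  calc ∑ m ∈ range (n + 1), (-1 : ℤ) ^ (1 + m - 1) * ((1 + m - 1)! : ℤ) *
        stirlingRes (n + 1) (1 + m) r
      = ∑ m ∈ range (n + 1), ∑ j ∈ range r,
          (-1 : ℤ) ^ m * (m ! : ℤ) * (n.choose j * stirlingRes (n - j) m r : ℕ) :=
        sum_congr rfl fun m _ => by
          rw [add_comm 1 m, Nat.add_sub_cancel, stirlingRes_succ_succ, Nat.cast_sum, mul_sum]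
    _ = _ := by
        rw [sum_comm]
        refine sum_congr rfl fun j _ => ?_
        rw [altFubini_eq_sum_range (N := n + 1) (by omega), mul_sum]
        refine sum_congr rfl fun m _ => ?_
        push_cast
        ring

theorem sum_Icc_stirlingRes_eq_neg_choose_mul_altFubini {n : ℕ} (r : ℕ) (hn : 0 < n) :
    ∑ m ∈ Icc 1 (n + 1), (-1 : ℤ) ^ (m - 1) * ((m - 1)! : ℤ) * stirlingRes (n + 1) m r =
      -((n.choose r : ℤ) * altFubini r (n - r)) := by
  rw [sum_Icc_stirlingRes_eq_sum_choose_mul_altFubini, eq_neg_iff_add_eq_zero, ← sum_range_succ]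
  exact sum_range_choose_mul_altFubini r hn

theorem sum_Icc_stirlingRes_add_succ {i r : ℕ} (hi : 0 < i) (hir : i ≤ r) :
    ∑ m ∈ Icc 1 (i + r + 1), (-1 : ℤ) ^ (m - 1) * ((m - 1)! : ℤ) * stirlingRes (i + r + 1) m r =
      (-1) ^ (i + 1) * ((i + r).choose r : ℤ) := by
  rw [sum_Icc_stirlingRes_eq_neg_choose_mul_altFubini r (by omega), Nat.add_sub_cancel,
    altFubini_of_le hir, pow_succ]
  ring

theorem Nat.Prime.choose_add_modEq_one {p j : ℕ} (hp : p.Prime) (hj : j < p) :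
    ((p + j).choose p : ℤ) ≡ 1 [ZMOD p] := by
  have := Fact.mk hp
  have hlucas := Choose.choose_modEq_choose_mod_mul_choose_div (n := p + j) (k := p) (p := p)
  rwa [Nat.add_mod_left, Nat.mod_self, Nat.mod_eq_of_lt hj, Nat.add_div_left _ hp.pos,
    Nat.div_eq_of_lt hj, Nat.div_self hp.pos, Nat.choose_zero_right, Nat.choose_self,
    Nat.cast_one, mul_one] at hlucas

theorem stmt_16_general (p i : ℕ) (hp : p.Prime) (h1 : 1 ≤ i) (h2 : i ≤ p - 1) :
    (i : ℤ) * ∑ m ∈ Finset.Icc 1 (i + p),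
        (-1 : ℤ) ^ (m - 1) * (Nat.factorial (m - 1) : ℤ) * stirlingRes (i + p) m (p - 1) ≡
      (-1) ^ (i + 1) * (p : ℤ) [ZMOD (p : ℤ) ^ 2] := by
  have hp1 : p - 1 + 1 = p := Nat.sub_add_cancel hp.one_le
  have hsum := sum_Icc_stirlingRes_add_succ h1 h2
  rw [add_assoc, hp1] at hsum
  have hchoose : i * (i + (p - 1)).choose (p - 1) = p * (p + (i - 1)).choose p := by
    have := Nat.choose_succ_right_eq (i + (p - 1)) (p - 1)
    rw [hp1, show i + (p - 1) - (p - 1) = i by omega] at this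
    rw [mul_comm, ← this, show i + (p - 1) = p + (i - 1) by omega, mul_comm]
  calc (i : ℤ) * ∑ m ∈ Icc 1 (i + p), (-1 : ℤ) ^ (m - 1) * ((m - 1)! : ℤ) *
          stirlingRes (i + p) m (p - 1)
      = (-1) ^ (i + 1) * (p * ((p + (i - 1)).choose p : ℤ)) := by
        rw [hsum, mul_left_comm]
        exact_mod_cast congrArg (fun x : ℕ => (-1 : ℤ) ^ (i + 1) * x) hchoose
    _ ≡ (-1) ^ (i + 1) * (p * 1) [ZMOD (p : ℤ) ^ 2] := by
        rw [sq]
        exact ((hp.choose_add_modEq_one (by omega)).mul_left' (c := p)).mul_left _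
    _ = (-1) ^ (i + 1) * p := by rw [mul_one]

theorem stmt_16 (p i : ℕ) (hp : p.Prime) (hp3 : 3 ≤ p) (h1 : 1 ≤ i) (h2 : i ≤ p - 1) :
    (i : ℤ) * ∑ m ∈ Finset.Icc 1 (i + p),
        (-1 : ℤ) ^ (m - 1) * (Nat.factorial (m - 1) : ℤ) * stirlingRes (i + p) m (p - 1) ≡
      (-1) ^ (i + 1) * (p : ℤ) [ZMOD (p : ℤ) ^ 2] :=
  stmt_16_general p i hp h1 h2
end
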